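/- arXiv:2510.21126 — 2 statements merged into one kernel-verified Lean document; each statement's English description precedes it below -/
import Mathlib

section
/- Under the assumptions in the context, l and u are rational, D = [l, u], and there exist an integer k ≥ 1 and rational numbers l = τ_0 ≤ τ_1 ≤ ⋯ ≤ τ_k = u such that ψ is affine on each interval [τ_{j−1}, τ_j] for j = 1,…,k; in particular, ψ is continuous on [l, u]. -/
noncomputable section

/-- Solution set of a finite system of rational linear inequalities. -/
def Hs (n : ℕ) (F : Finset ((Fin n → ℚ) × ℚ)) : Set (Fin n → ℝ) :=
  {w | ∀ p ∈ F, ∑ j, ((p.1 j : ℝ)) * w j ≤ (p.2 : ℝ)}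

def IsRatPoly {n : ℕ} (S : Set (Fin n → ℝ)) : Prop := ∃ F, S = Hs n F

lemma isRatPoly_le {n : ℕ} (a : Fin n → ℚ) (b : ℚ) :
    IsRatPoly {w : Fin n → ℝ | ∑ j, (a j : ℝ) * w j ≤ (b : ℝ)} := by
  refine ⟨{(a, b)}, ?_⟩
  ext w; simp [Hs]

lemma isRatPoly_inter {n : ℕ} {S T : Set (Fin n → ℝ)} (hS : IsRatPoly S) (hT : IsRatPoly T) :
    IsRatPoly (S ∩ T) := by
  obtain ⟨F, rfl⟩ := hS; obtain ⟨G, rfl⟩ := hT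
  refine ⟨F ∪ G, ?_⟩
  ext w
  simp only [Hs, Set.mem_inter_iff, Set.mem_setOf_eq, Finset.mem_union]
  constructor
  · rintro ⟨h1, h2⟩ p (hp | hp); exacts [h1 p hp, h2 p hp]
  · intro h; exact ⟨fun p hp => h p (Or.inl hp), fun p hp => h p (Or.inr hp)⟩

lemma isRatPoly_eq {n : ℕ} (a : Fin n → ℚ) (b : ℚ) :
    IsRatPoly {w : Fin n → ℝ | ∑ j, (a j : ℝ) * w j = (b : ℝ)} := by
  have h := isRatPoly_inter (isRatPoly_le a b) (isRatPoly_le (fun j => -a j) (-b))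
  convert h using 1
  ext w
  simp only [Set.mem_inter_iff, Set.mem_setOf_eq, Rat.cast_neg, neg_mul]
  rw [Finset.sum_neg_distrib]
  constructor
  · intro he
    exact ⟨le_of_eq he, by rw [he]⟩
  · rintro ⟨h1, h2⟩
    have h2' : (b:ℝ) ≤ ∑ j, (a j : ℝ) * w j := by linarith
    exact le_antisymm h1 h2'

lemma isRatPoly_forall {n : ℕ} {ι : Type*} [Fintype ι] (S : ι → Set (Fin n → ℝ))
    (h : ∀ i, IsRatPoly (S i)) : IsRatPoly {w | ∀ i, w ∈ S i} := by
  classical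
  choose F hF using h
  refine ⟨Finset.univ.biUnion F, ?_⟩
  ext w
  simp only [Set.mem_setOf_eq, Hs, Finset.mem_biUnion, Finset.mem_univ, true_and]
  constructor
  · rintro h p ⟨i, hp⟩
    have := h i
    rw [hF i] at this
    exact this p hp
  · intro h i
    rw [hF i]
    exact fun p hp => h p ⟨i, hp⟩

lemma isRatPoly_univ {n : ℕ} : IsRatPoly (Set.univ : Set (Fin n → ℝ)) :=
  ⟨∅, by ext w; simp [Hs]⟩

/-- helper: existence of a real between finitely many lower and upper bounds. -/
lemma exists_between_finsets {ι : Type*} (P N : Finset ι) (U Lo : ι → ℝ)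
    (h : ∀ p ∈ P, ∀ q ∈ N, Lo q ≤ U p) :
    ∃ t : ℝ, (∀ p ∈ P, t ≤ U p) ∧ (∀ q ∈ N, Lo q ≤ t) := by
  rcases N.eq_empty_or_nonempty with rfl | hN
  · rcases P.eq_empty_or_nonempty with rfl | hP
    · exact ⟨0, by simp, by simp⟩
    · exact ⟨P.inf' hP U, fun p hp => Finset.inf'_le U hp, by simp⟩
  · refine ⟨N.sup' hN Lo, fun p hp => Finset.sup'_le hN Lo (fun q hq => h p hp q hq),
      fun q hq => Finset.le_sup' Lo hq⟩

/-- Fourier–Motzkin elimination of the last variable. -/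
lemma isRatPoly_proj {n : ℕ} {S : Set (Fin (n + 1) → ℝ)} (hS : IsRatPoly S) :
    IsRatPoly {w : Fin n → ℝ | ∃ t : ℝ, Fin.snoc w t ∈ S} := by
  classical
  obtain ⟨F, rfl⟩ := hS
  set c : ((Fin (n+1) → ℚ) × ℚ) → ℚ := fun p => p.1 (Fin.last n) with hc
  set Z : Finset ((Fin (n+1) → ℚ) × ℚ) := F.filter (fun p => c p = 0) with hZ
  set P : Finset ((Fin (n+1) → ℚ) × ℚ) := F.filter (fun p => 0 < c p) with hP
  set N : Finset ((Fin (n+1) → ℚ) × ℚ) := F.filter (fun p => c p < 0) with hN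
  set G : Finset ((Fin n → ℚ) × ℚ) :=
    Z.image (fun p => (Fin.init p.1, p.2)) ∪
    (P ×ˢ N).image (fun pq =>
      ((fun j => (-(c pq.2)) * pq.1.1 (Fin.castSucc j) + (c pq.1) * pq.2.1 (Fin.castSucc j)),
        (-(c pq.2)) * pq.1.2 + (c pq.1) * pq.2.2)) with hG
  -- key sum expansion
  have sum_snoc : ∀ (p : (Fin (n+1) → ℚ) × ℚ) (w : Fin n → ℝ) (t : ℝ),
      ∑ j, (p.1 j : ℝ) * (Fin.snoc w t : Fin (n+1) → ℝ) j
        = (∑ j, (p.1 (Fin.castSucc j) : ℝ) * w j) + (c p : ℝ) * t := by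
    intro p w t
    rw [Fin.sum_univ_castSucc]
    simp [hc]
  refine ⟨G, ?_⟩
  ext w
  simp only [Set.mem_setOf_eq]
  constructor
  · -- projection satisfies G
    rintro ⟨t, ht⟩
    intro p hp
    rw [hG] at hp
    simp only [Finset.mem_union, Finset.mem_image, Finset.mem_product] at hp
    rcases hp with ⟨q, hq, rfl⟩ | ⟨⟨q, r⟩, ⟨hq, hr⟩, rfl⟩
    · -- zero row
      rw [hZ, Finset.mem_filter] at hq
      have h1 := ht q hq.1
      rw [sum_snoc q w t, hq.2] at h1
      simpa [Fin.init] using h1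
    · -- combination row
      rw [hP, Finset.mem_filter] at hq
      rw [hN, Finset.mem_filter] at hr
      have h1 := ht q hq.1
      have h2 := ht r hr.1
      rw [sum_snoc q w t] at h1
      rw [sum_snoc r w t] at h2
      have hcq : (0:ℝ) < (c q : ℝ) := by exact_mod_cast hq.2
      have hcr : (0:ℝ) < -(c r : ℝ) := by
        have : (c r : ℝ) < 0 := by exact_mod_cast hr.2
        linarith
      have e1 : (-(c r : ℝ)) * ((∑ j, (q.1 (Fin.castSucc j) : ℝ) * w j) + (c q : ℝ) * t)
          ≤ (-(c r : ℝ)) * (q.2 : ℝ) := by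
        exact mul_le_mul_of_nonneg_left h1 (le_of_lt hcr)
      have e2 : ((c q : ℝ)) * ((∑ j, (r.1 (Fin.castSucc j) : ℝ) * w j) + (c r : ℝ) * t)
          ≤ ((c q : ℝ)) * (r.2 : ℝ) := by
        exact mul_le_mul_of_nonneg_left h2 (le_of_lt hcq)
      have expand : ∑ j, (((-(c r)) * q.1 (Fin.castSucc j) + (c q) * r.1 (Fin.castSucc j) : ℚ) : ℝ) * w j
          = (-(c r : ℝ)) * (∑ j, (q.1 (Fin.castSucc j) : ℝ) * w j)
            + ((c q : ℝ)) * (∑ j, (r.1 (Fin.castSucc j) : ℝ) * w j) := by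
        rw [Finset.mul_sum, Finset.mul_sum, ← Finset.sum_add_distrib]
        refine Finset.sum_congr rfl (fun j _ => ?_)
        push_cast
        ring
      calc ∑ j, (((-(c r)) * q.1 (Fin.castSucc j) + (c q) * r.1 (Fin.castSucc j) : ℚ) : ℝ) * w j
          = (-(c r : ℝ)) * (∑ j, (q.1 (Fin.castSucc j) : ℝ) * w j)
            + ((c q : ℝ)) * (∑ j, (r.1 (Fin.castSucc j) : ℝ) * w j) := expand
        _ ≤ (-(c r : ℝ)) * (q.2:ℝ) + ((c q : ℝ)) * (r.2:ℝ) := by nlinarith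
        _ = (((-(c r)) * q.2 + (c q) * r.2 : ℚ) : ℝ) := by push_cast; ring
  · -- G implies existence of t
    intro hw
    set U : ((Fin (n+1) → ℚ) × ℚ) → ℝ :=
      fun p => ((p.2 : ℝ) - ∑ j, (p.1 (Fin.castSucc j) : ℝ) * w j) / (c p : ℝ) with hU
    have key : ∀ p ∈ P, ∀ q ∈ N, U q ≤ U p := by
      intro p hp q hq
      have hrow := hw (((fun j => (-(c q)) * p.1 (Fin.castSucc j) + (c p) * q.1 (Fin.castSucc j)),
          (-(c q)) * p.2 + (c p) * q.2)) ?side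
      case side =>
        rw [hG]
        simp only [Finset.mem_union, Finset.mem_image, Finset.mem_product]
        exact Or.inr ⟨(p, q), ⟨hp, hq⟩, rfl⟩
      rw [hP, Finset.mem_filter] at hp
      rw [hN, Finset.mem_filter] at hq
      have hcp : (0:ℝ) < (c p : ℝ) := by exact_mod_cast hp.2
      have hcq : (c q : ℝ) < 0 := by exact_mod_cast hq.2
      have expand : ∑ j, (((-(c q)) * p.1 (Fin.castSucc j) + (c p) * q.1 (Fin.castSucc j) : ℚ) : ℝ) * w j
          = (-(c q : ℝ)) * (∑ j, (p.1 (Fin.castSucc j) : ℝ) * w j)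
            + ((c p : ℝ)) * (∑ j, (q.1 (Fin.castSucc j) : ℝ) * w j) := by
        rw [Finset.mul_sum, Finset.mul_sum, ← Finset.sum_add_distrib]
        refine Finset.sum_congr rfl (fun j _ => ?_)
        push_cast
        ring
      set Sp := ∑ j, (p.1 (Fin.castSucc j) : ℝ) * w j with hSp
      set Sq := ∑ j, (q.1 (Fin.castSucc j) : ℝ) * w j with hSq
      simp only at hrow
      rw [expand] at hrow
      have hrow' : (-(c q : ℝ)) * (∑ j, (p.1 (Fin.castSucc j) : ℝ) * w j)
            + ((c p : ℝ)) * (∑ j, (q.1 (Fin.castSucc j) : ℝ) * w j)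
          ≤ (-(c q : ℝ)) * (p.2:ℝ) + ((c p : ℝ)) * (q.2:ℝ) := by
        convert hrow using 1
        push_cast; ring
      have hq0 : (c q : ℝ) ≠ 0 := ne_of_lt hcq
      have hp0 : (c p : ℝ) ≠ 0 := ne_of_gt hcp
      have e1 : U q * (c q : ℝ) = (q.2:ℝ) - Sq := by
        rw [hU]; field_simp; rfl
      have e2 : U p * (c p : ℝ) = (p.2:ℝ) - Sp := by
        rw [hU]; field_simp; rfl
      have hprod : 0 < (c p : ℝ) * (-(c q : ℝ)) := mul_pos hcp (by linarith)
      nlinarith [e1, e2, hrow', hprod]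
    obtain ⟨t, ht1, ht2⟩ := exists_between_finsets P N U U key
    refine ⟨t, ?_⟩
    intro p hp
    rw [sum_snoc p w t]
    rcases lt_trichotomy (c p) 0 with hcp | hcp | hcp
    · have hmem : p ∈ N := by rw [hN, Finset.mem_filter]; exact ⟨hp, hcp⟩
      have := ht2 p hmem
      rw [hU] at this
      have hcr : (c p : ℝ) < 0 := by exact_mod_cast hcp
      rw [div_le_iff_of_neg hcr] at this
      linarith
    · have hmem : p ∈ Z := by rw [hZ, Finset.mem_filter]; exact ⟨hp, hcp⟩
      have := hw (Fin.init p.1, p.2) ?zmem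
      case zmem =>
        rw [hG]
        simp only [Finset.mem_union, Finset.mem_image]
        exact Or.inl ⟨p, hmem, rfl⟩
      simp only [Fin.init] at this
      rw [hcp]
      push_cast
      simpa using this
    · have hmem : p ∈ P := by rw [hP, Finset.mem_filter]; exact ⟨hp, hcp⟩
      have := ht1 p hmem
      rw [hU] at this
      have hcr : (0:ℝ) < (c p : ℝ) := by exact_mod_cast hcp
      rw [le_div_iff₀ hcr] at this
      linarith

lemma isRatPoly_projMany {m : ℕ} : ∀ {n : ℕ} {S : Set (Fin (m + n) → ℝ)}, IsRatPoly S →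
    IsRatPoly {w : Fin m → ℝ | ∃ z : Fin n → ℝ, Fin.append w z ∈ S} := by
  intro n
  induction n with
  | zero =>
    intro S hS
    have : {w : Fin m → ℝ | ∃ z : Fin 0 → ℝ, Fin.append w z ∈ S} = S := by
      ext w
      simp only [Set.mem_setOf_eq]
      constructor
      · rintro ⟨z, hz⟩
        have : Fin.append w z = w := by
          funext i
          have hz' : z = Fin.elim0 := Subsingleton.elim _ _
          subst hz'
          simp [Fin.append_elim0]
        rwa [this] at hz
      · intro h
        refine ⟨Fin.elim0, ?_⟩
        have : Fin.append w (Fin.elim0 : Fin 0 → ℝ) = w := by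
          funext i
          simp [Fin.append_elim0]
        rwa [this]
    rw [this]; exact hS
  | succ n ih =>
    intro S hS
    have hT : IsRatPoly {v : Fin (m + n) → ℝ | ∃ t : ℝ, Fin.snoc v t ∈ S} :=
      isRatPoly_proj hS
    have : {w : Fin m → ℝ | ∃ z : Fin (n+1) → ℝ, Fin.append w z ∈ S}
        = {w : Fin m → ℝ | ∃ z' : Fin n → ℝ, Fin.append w z' ∈
            {v : Fin (m + n) → ℝ | ∃ t : ℝ, Fin.snoc v t ∈ S}} := by
      ext w
      simp only [Set.mem_setOf_eq]
      constructor
      · rintro ⟨z, hz⟩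
        refine ⟨Fin.init z, z (Fin.last n), ?_⟩
        rw [← Fin.append_snoc, Fin.snoc_init_self]
        exact hz
      · rintro ⟨z', t, hz⟩
        exact ⟨Fin.snoc z' t, by rwa [Fin.append_snoc]⟩
    rw [this]
    exact ih hT

lemma sum_split {m nb : ℕ} (h : Fin m → ℚ) (a : Fin nb → ℚ) (u : Fin (m + nb) → ℝ) :
    ∑ i, ((Fin.append h a) i : ℝ) * u i
      = ∑ i : Fin m, (h i : ℝ) * u (Fin.castAdd nb i)
        + ∑ k : Fin nb, (a k : ℝ) * u (Fin.natAdd m k) := by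
  rw [Fin.sum_univ_add]
  congr 1
  · exact Finset.sum_congr rfl (fun i _ => by rw [Fin.append_left])
  · exact Finset.sum_congr rfl (fun k _ => by rw [Fin.append_right])



/-- The lower-level feasible set `L(x2)`. -/
def Lset (nb mb mb' : ℕ) (A11 : Matrix (Fin mb) (Fin nb) ℚ) (A12 : Fin mb → ℚ)
    (b1 : Fin mb → ℚ) (A12' : Fin mb' → ℚ) (b1' : Fin mb' → ℚ) (x2 : ℝ) :
    Set (Fin nb → ℝ) :=
  {z1 | (∀ j, ∑ k, (A11 j k : ℝ) * z1 k + (A12 j : ℝ) * x2 = (b1 j : ℝ)) ∧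
        (∀ j, (b1' j : ℝ) ≤ (A12' j : ℝ) * x2) ∧
        ∀ k, 0 ≤ z1 k}

/-- The argmin set of the lower-level LP given `x2`. -/
def ArgL (nb mb mb' : ℕ) (c11 : Fin nb → ℚ) (A11 : Matrix (Fin mb) (Fin nb) ℚ)
    (A12 : Fin mb → ℚ) (b1 : Fin mb → ℚ) (A12' : Fin mb' → ℚ) (b1' : Fin mb' → ℚ)
    (x2 : ℝ) : Set (Fin nb → ℝ) :=
  {z1 ∈ Lset nb mb mb' A11 A12 b1 A12' b1' x2 |
    ∀ y ∈ Lset nb mb mb' A11 A12 b1 A12' b1' x2,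
      ∑ k, (c11 k : ℝ) * z1 k ≤ ∑ k, (c11 k : ℝ) * y k}

/-- The value function `ψ(x2)`. -/
def psi (nb mb mb' : ℕ) (c11 c21 : Fin nb → ℚ) (c22 : ℚ)
    (A11 : Matrix (Fin mb) (Fin nb) ℚ) (A12 : Fin mb → ℚ) (b1 : Fin mb → ℚ)
    (A12' : Fin mb' → ℚ) (b1' : Fin mb' → ℚ) (x2 : ℝ) : ℝ :=
  sInf ((fun z1 => ∑ k, (c21 k : ℝ) * z1 k + (c22 : ℝ) * x2) ''
    ArgL nb mb mb' c11 A11 A12 b1 A12' b1' x2)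

section Data

variable (nb mb mb' : ℕ) (c11 c21 : Fin nb → ℚ) (c22 : ℚ)
    (A11 : Matrix (Fin mb) (Fin nb) ℚ) (A12 : Fin mb → ℚ) (b1 : Fin mb → ℚ)
    (A12' : Fin mb' → ℚ) (b1' : Fin mb' → ℚ)

/-- The master polyhedron in variables `(x, s, t, z)`. -/
def S2set : Set (Fin (3 + nb) → ℝ) := {u |
  (fun k => u (Fin.natAdd 3 k)) ∈ Lset nb mb mb' A11 A12 b1 A12' b1' (u (Fin.castAdd nb 0)) ∧
  ∑ k, (c11 k : ℝ) * u (Fin.natAdd 3 k) ≤ u (Fin.castAdd nb 1) ∧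
  ∑ k, (c21 k : ℝ) * u (Fin.natAdd 3 k) + (c22 : ℝ) * u (Fin.castAdd nb 0)
    ≤ u (Fin.castAdd nb 2)}

lemma isRatPoly_S2set : IsRatPoly (S2set nb mb mb' c11 c21 c22 A11 A12 b1 A12' b1') := by
  classical
  have heq : S2set nb mb mb' c11 c21 c22 A11 A12 b1 A12' b1' =
      {u : Fin (3 + nb) → ℝ | ∀ j : Fin mb, u ∈
        {u' : Fin (3+nb) → ℝ | ∑ i, ((Fin.append ![A12 j, 0, 0] (A11 j)) i : ℝ) * u' i = (b1 j : ℝ)}} ∩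
      ({u | ∀ j : Fin mb', u ∈
        {u' : Fin (3+nb) → ℝ | ∑ i, ((Fin.append ![-A12' j, 0, 0] (fun _ => (0:ℚ))) i : ℝ) * u' i ≤ ((-b1' j : ℚ) : ℝ)}} ∩
      ({u | ∀ k : Fin nb, u ∈
        {u' : Fin (3+nb) → ℝ | ∑ i, ((Fin.append ![0,0,0] (fun k' => if k' = k then (-1:ℚ) else 0)) i : ℝ) * u' i ≤ ((0:ℚ) : ℝ)}} ∩
      ({u' : Fin (3+nb) → ℝ | ∑ i, ((Fin.append ![0,-1,0] c11) i : ℝ) * u' i ≤ ((0:ℚ) : ℝ)} ∩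
       {u' : Fin (3+nb) → ℝ | ∑ i, ((Fin.append ![c22,0,-1] c21) i : ℝ) * u' i ≤ ((0:ℚ) : ℝ)}))) := by
    ext u
    simp only [S2set, Lset, Set.mem_setOf_eq, Set.mem_inter_iff]
    rw [show (∀ j : Fin mb, ∑ i, ((Fin.append ![A12 j, 0, 0] (A11 j)) i : ℝ) * u i = (b1 j : ℝ))
        ↔ (∀ j, ∑ k, (A11 j k : ℝ) * u (Fin.natAdd 3 k) + (A12 j : ℝ) * u (Fin.castAdd nb 0) = (b1 j : ℝ)) from
      forall_congr' fun j => by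
        rw [sum_split]
        simp [Fin.sum_univ_three]
        all_goals (constructor <;> intro h <;> linarith)]
    rw [show (∀ j : Fin mb', ∑ i, ((Fin.append ![-A12' j, 0, 0] (fun _ => (0:ℚ))) i : ℝ) * u i ≤ ((-b1' j : ℚ) : ℝ))
        ↔ (∀ j, (b1' j : ℝ) ≤ (A12' j : ℝ) * u (Fin.castAdd nb 0)) from
      forall_congr' fun j => by
        rw [sum_split]
        simp [Fin.sum_univ_three]
        all_goals (constructor <;> intro h <;> linarith)]
    rw [show (∀ k : Fin nb, ∑ i, ((Fin.append ![0,0,0] (fun k' => if k' = k then (-1:ℚ) else 0)) i : ℝ) * u i ≤ ((0:ℚ) : ℝ))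
        ↔ (∀ k, 0 ≤ u (Fin.natAdd 3 k)) from
      forall_congr' fun k => by
        rw [sum_split]
        simp only [Fin.sum_univ_three, Matrix.cons_val_zero, Matrix.cons_val_one, Matrix.head_cons,
          Matrix.cons_val_two, Matrix.tail_cons, Rat.cast_zero, zero_mul, add_zero, zero_add]
        rw [show (∑ k' : Fin nb, ((if k' = k then (-1:ℚ) else 0 : ℚ) : ℝ) * u (Fin.natAdd 3 k'))
            = -u (Fin.natAdd 3 k) from by
          rw [Finset.sum_eq_single k]
          · simp
          · intro b _ hb; simp [hb]
          · intro hk; exact absurd (Finset.mem_univ k) hk]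
        constructor <;> intro h <;> linarith]
    rw [show (∑ i, ((Fin.append ![0,-1,0] c11) i : ℝ) * u i ≤ ((0:ℚ) : ℝ))
        ↔ (∑ k, (c11 k : ℝ) * u (Fin.natAdd 3 k) ≤ u (Fin.castAdd nb 1)) from by
      rw [sum_split]
      simp [Fin.sum_univ_three]
      all_goals (constructor <;> intro h <;> linarith)]
    rw [show (∑ i, ((Fin.append ![c22,0,-1] c21) i : ℝ) * u i ≤ ((0:ℚ) : ℝ))
        ↔ (∑ k, (c21 k : ℝ) * u (Fin.natAdd 3 k) + (c22 : ℝ) * u (Fin.castAdd nb 0) ≤ u (Fin.castAdd nb 2)) from by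
      rw [sum_split]
      simp [Fin.sum_univ_three]
      all_goals (constructor <;> intro h <;> linarith)]
    tauto
  rw [heq]
  refine isRatPoly_inter (isRatPoly_forall _ (fun j => isRatPoly_eq _ _))
    (isRatPoly_inter (isRatPoly_forall _ (fun j => isRatPoly_le _ _))
    (isRatPoly_inter (isRatPoly_forall _ (fun k => isRatPoly_le _ _))
    (isRatPoly_inter (isRatPoly_le _ _) (isRatPoly_le _ _))))

end Data



lemma affdiv2 {p0 p1 r x t : ℝ} (h : p1 < 0) :
    p0 / (-p1) * x + r / p1 ≤ t ↔ p0 * x + p1 * t ≤ r := by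
  have hn : (0:ℝ) < -p1 := by linarith
  have h1 : p1 ≠ 0 := ne_of_lt h
  constructor
  · intro hA
    have h2 := mul_le_mul_of_nonneg_right hA (le_of_lt hn)
    have e : (p0 / (-p1) * x + r / p1) * (-p1) = p0 * x - r := by field_simp; ring
    rw [e] at h2
    nlinarith
  · intro hB
    have e : p0 / (-p1) * x + r / p1 = (p0 * x - r) / (-p1) := by field_simp; ring
    rw [e, div_le_iff₀ hn]
    nlinarith

lemma affdiv3 {p0 p1 p2 r x s t : ℝ} (h : p2 < 0) :
    p0 / (-p2) * x + p1 / (-p2) * s + r / p2 ≤ t ↔ p0 * x + p1 * s + p2 * t ≤ r := by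
  have hn : (0:ℝ) < -p2 := by linarith
  have h1 : p2 ≠ 0 := ne_of_lt h
  constructor
  · intro hA
    have h2 := mul_le_mul_of_nonneg_right hA (le_of_lt hn)
    have e : (p0 / (-p2) * x + p1 / (-p2) * s + r / p2) * (-p2) = p0 * x + p1 * s - r := by
      field_simp; ring
    rw [e] at h2
    nlinarith
  · intro hB
    have e : p0 / (-p2) * x + p1 / (-p2) * s + r / p2 = (p0 * x + p1 * s - r) / (-p2) := by
      field_simp; ring
    rw [e, div_le_iff₀ hn]
    nlinarith

lemma paste_closed {f : ℝ → ℝ} {s t : Set ℝ} (hs : IsClosed s) (ht : IsClosed t)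
    (h1 : ContinuousOn f s) (h2 : ContinuousOn f t) : ContinuousOn f (s ∪ t) := by
  intro x hx
  have cs : ContinuousWithinAt f s x := by
    by_cases h : x ∈ s
    · exact h1 x h
    · exact continuousWithinAt_of_notMem_closure (by rwa [hs.closure_eq])
  have ct : ContinuousWithinAt f t x := by
    by_cases h : x ∈ t
    · exact h2 x h
    · exact continuousWithinAt_of_notMem_closure (by rwa [ht.closure_eq])
  exact cs.union ct

lemma rat_cast_sup' {ι : Type*} (s : Finset ι) (hs : s.Nonempty) (f : ι → ℚ) :
    ((s.sup' hs f : ℚ) : ℝ) = s.sup' hs (fun p => ((f p : ℚ) : ℝ)) :=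
  Finset.comp_sup'_eq_sup'_comp hs (fun q : ℚ => (q : ℝ)) (fun x y => Rat.cast_max x y)

lemma rat_cast_inf' {ι : Type*} (s : Finset ι) (hs : s.Nonempty) (f : ι → ℚ) :
    ((s.inf' hs f : ℚ) : ℝ) = s.inf' hs (fun p => ((f p : ℚ) : ℝ)) :=
  Finset.apply_inf'_eq_inf'_comp hs (fun q : ℚ => (q : ℝ)) (fun x y => Rat.cast_min x y)


lemma affine_le_on_interval {A1 B1 A2 B2 a b m x ρ : ℝ}
    (ham : a < m) (hmb : m < b) (hax : a ≤ x) (hxb : x ≤ b)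
    (hm : A1 * m + B1 ≤ A2 * m + B2)
    (hroot : A1 ≠ A2 → ρ = (B2 - B1) / (A1 - A2))
    (hno : ¬(a < ρ ∧ ρ < b)) :
    A1 * x + B1 ≤ A2 * x + B2 := by
  by_cases hA : A1 = A2
  · subst hA; linarith
  · have hρ := hroot hA
    have hAne : A1 - A2 ≠ 0 := sub_ne_zero.mpr hA
    have hρval : (A1 - A2) * ρ = B2 - B1 := by
      rw [hρ]; field_simp
    by_contra hcon
    push_neg at hcon
    rcases lt_or_gt_of_ne hAne with hneg | hpos
    · -- A1 - A2 < 0 : d(m) ≤ 0 gives m ≥ ρ, d(x) > 0 gives x < ρ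
      have h1 : ρ ≤ m := by nlinarith
      have h2 : x < ρ := by nlinarith
      exact hno ⟨lt_of_le_of_lt hax h2, lt_of_le_of_lt h1 hmb⟩
    · have h1 : m ≤ ρ := by nlinarith
      have h2 : ρ < x := by nlinarith
      exact hno ⟨lt_of_lt_of_le ham h1, lt_of_lt_of_le h2 hxb⟩

/-- under the stated assumptions, `l` and `u` are rational, `D = [l, u]`,
and `ψ` is piecewise affine on `[l, u]` with rational breakpoints; in particular `ψ` is
continuous on `[l, u]`. -/
theorem stmt15 (nb mb mb' : ℕ) (c11 c21 : Fin nb → ℚ) (c22 : ℚ)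
    (A11 : Matrix (Fin mb) (Fin nb) ℚ) (A12 : Fin mb → ℚ) (b1 : Fin mb → ℚ)
    (A12' : Fin mb' → ℚ) (b1' : Fin mb' → ℚ)
    (D : Set ℝ) (hD : D = {x2 | (Lset nb mb mb' A11 A12 b1 A12' b1' x2).Nonempty})
    (l u : ℝ) (hl : l = sInf D) (hu : u = sSup D)
    (hDne : D.Nonempty) (hDbdd : BddBelow D ∧ BddAbove D)
    (hLL : ∀ x2 ∈ D, (ArgL nb mb mb' c11 A11 A12 b1 A12' b1' x2).Nonempty)
    (hψ : ∀ x2 ∈ D, ∃ z1 ∈ ArgL nb mb mb' c11 A11 A12 b1 A12' b1' x2,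
      ∀ y ∈ ArgL nb mb mb' c11 A11 A12 b1 A12' b1' x2,
        ∑ k, (c21 k : ℝ) * z1 k + (c22 : ℝ) * x2 ≤
          ∑ k, (c21 k : ℝ) * y k + (c22 : ℝ) * x2) :
    (∃ lq : ℚ, l = (lq : ℝ)) ∧ (∃ uq : ℚ, u = (uq : ℝ)) ∧
    D = Set.Icc l u ∧
    (∃ k : ℕ, 1 ≤ k ∧ ∃ τ : Fin (k + 1) → ℚ,
      Monotone (fun j => ((τ j : ℝ))) ∧
      ((τ 0 : ℝ)) = l ∧ ((τ (Fin.last k) : ℝ)) = u ∧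
      ∀ j : Fin k, ∃ α β : ℝ,
        ∀ x ∈ Set.Icc ((τ j.castSucc : ℝ)) ((τ j.succ : ℝ)),
          psi nb mb mb' c11 c21 c22 A11 A12 b1 A12' b1' x = α * x + β) ∧
    ContinuousOn (psi nb mb mb' c11 c21 c22 A11 A12 b1 A12' b1') (Set.Icc l u) := by
  classical
  -- abbreviations
  set LL := Lset nb mb mb' A11 A12 b1 A12' b1' with hLLdef
  set AL := ArgL nb mb mb' c11 A11 A12 b1 A12' b1' with hALdef
  -- the master polyhedron and its projections
  set E2 : Set (Fin 3 → ℝ) :=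
    {w | ∃ z, Fin.append w z ∈ S2set nb mb mb' c11 c21 c22 A11 A12 b1 A12' b1'} with hE2def
  have hE2poly : IsRatPoly E2 :=
    isRatPoly_projMany (isRatPoly_S2set nb mb mb' c11 c21 c22 A11 A12 b1 A12' b1')
  have hE2mem : ∀ w : Fin 3 → ℝ, w ∈ E2 ↔ ∃ z, z ∈ LL (w 0) ∧
      (∑ k, (c11 k : ℝ) * z k) ≤ w 1 ∧
      (∑ k, (c21 k : ℝ) * z k) + (c22 : ℝ) * w 0 ≤ w 2 := by
    intro w
    rw [hE2def]
    simp only [Set.mem_setOf_eq, S2set, Fin.append_left, Fin.append_right, hLLdef]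
  set E1 : Set (Fin 2 → ℝ) := {v | ∃ t, Fin.snoc v t ∈ E2} with hE1def
  have hE1poly : IsRatPoly E1 := isRatPoly_proj hE2poly
  have h03 : (0 : Fin 3) = Fin.castSucc 0 := by decide
  have h13 : (1 : Fin 3) = Fin.castSucc 1 := by decide
  have h23 : (2 : Fin 3) = Fin.last 2 := by decide
  have h02 : (0 : Fin 2) = Fin.castSucc 0 := by decide
  have h12 : (1 : Fin 2) = Fin.last 1 := by decide
  have hE1mem : ∀ v : Fin 2 → ℝ, v ∈ E1 ↔ ∃ z, z ∈ LL (v 0) ∧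
      (∑ k, (c11 k : ℝ) * z k) ≤ v 1 := by
    intro v
    rw [hE1def]
    simp only [Set.mem_setOf_eq]
    constructor
    · rintro ⟨t, ht⟩
      rw [hE2mem] at ht
      obtain ⟨z, hz1, hz2, _⟩ := ht
      rw [h03, Fin.snoc_castSucc] at hz1
      rw [h13, Fin.snoc_castSucc] at hz2
      exact ⟨z, hz1, hz2⟩
    · rintro ⟨z, hz1, hz2⟩
      refine ⟨(∑ k, (c21 k : ℝ) * z k) + (c22 : ℝ) * v 0, ?_⟩
      rw [hE2mem]
      refine ⟨z, ?_, ?_, ?_⟩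
      · rw [h03, Fin.snoc_castSucc]; exact hz1
      · rw [h13, Fin.snoc_castSucc]; exact hz2
      · rw [h03, Fin.snoc_castSucc, h23, Fin.snoc_last]
  set DS : Set (Fin 1 → ℝ) := {q | ∃ s, Fin.snoc q s ∈ E1} with hDSdef
  have hDSpoly : IsRatPoly DS := isRatPoly_proj hE1poly
  have hDSmem : ∀ q : Fin 1 → ℝ, q ∈ DS ↔ ∃ z, z ∈ LL (q 0) := by
    intro q
    rw [hDSdef]
    simp only [Set.mem_setOf_eq]
    constructor
    · rintro ⟨t, ht⟩
      rw [hE1mem] at ht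
      obtain ⟨z, hz1, _⟩ := ht
      rw [h02, Fin.snoc_castSucc] at hz1
      exact ⟨z, hz1⟩
    · rintro ⟨z, hz1⟩
      refine ⟨∑ k, (c11 k : ℝ) * z k, ?_⟩
      rw [hE1mem]
      refine ⟨z, ?_, ?_⟩
      · rw [h02, Fin.snoc_castSucc]; exact hz1
      · rw [h12, Fin.snoc_last]
  obtain ⟨F0, hF0⟩ := hDSpoly
  have hDrows : ∀ x : ℝ, x ∈ D ↔ ∀ p ∈ F0, (p.1 0 : ℝ) * x ≤ (p.2 : ℝ) := by
    intro x
    have hx : x ∈ D ↔ (fun _ : Fin 1 => x) ∈ DS := by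
      rw [hD]
      simp only [Set.mem_setOf_eq]
      rw [hDSmem]
      constructor
      · rintro ⟨z, hz⟩; exact ⟨z, hz⟩
      · rintro ⟨z, hz⟩; exact ⟨z, hz⟩
    rw [hx, hF0]
    simp only [Hs, Set.mem_setOf_eq, Fin.sum_univ_one]
  -- the two filters
  set N0 := F0.filter (fun p => p.1 0 < 0) with hN0def
  set P0 := F0.filter (fun p => 0 < p.1 0) with hP0def
  obtain ⟨x0, hx0⟩ := hDne
  have hN0ne : N0.Nonempty := by
    by_contra hemp
    rw [Finset.not_nonempty_iff_eq_empty] at hemp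
    obtain ⟨mlo, hmlo⟩ := hDbdd.1
    have : mlo - 1 + (- |x0|) ∈ D := by
      rw [hDrows]
      intro p hp
      have hp0 : ¬ p.1 0 < 0 := by
        intro hcon
        have : p ∈ N0 := by rw [hN0def, Finset.mem_filter]; exact ⟨hp, hcon⟩
        rw [hemp] at this
        exact absurd this (Finset.notMem_empty p)
      have hrow := (hDrows x0).mp hx0 p hp
      rcases lt_or_eq_of_le (not_lt.mp hp0) with h1 | h1
      · have hc : (0:ℝ) < (p.1 0 : ℝ) := by exact_mod_cast h1
        have hle : mlo - 1 + (- |x0|) ≤ x0 := by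
          have := hmlo hx0
          have := abs_nonneg x0
          have := neg_abs_le x0
          linarith
        nlinarith
      · have hc : (p.1 0 : ℝ) = 0 := by exact_mod_cast h1.symm
        rw [hc, zero_mul] at hrow ⊢
        exact hrow
    have := hmlo this
    have := abs_nonneg x0
    linarith
  have hP0ne : P0.Nonempty := by
    by_contra hemp
    rw [Finset.not_nonempty_iff_eq_empty] at hemp
    obtain ⟨mhi, hmhi⟩ := hDbdd.2
    have : mhi + 1 + |x0| ∈ D := by
      rw [hDrows]
      intro p hp
      have hp0 : ¬ 0 < p.1 0 := by
        intro hcon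
        have : p ∈ P0 := by rw [hP0def, Finset.mem_filter]; exact ⟨hp, hcon⟩
        rw [hemp] at this
        exact absurd this (Finset.notMem_empty p)
      have hrow := (hDrows x0).mp hx0 p hp
      rcases lt_or_eq_of_le (not_lt.mp hp0) with h1 | h1
      · have hc : (p.1 0 : ℝ) < 0 := by exact_mod_cast h1
        have hle : x0 ≤ mhi + 1 + |x0| := by
          have := hmhi hx0
          have := abs_nonneg x0
          have := le_abs_self x0
          linarith
        nlinarith
      · have hc : (p.1 0 : ℝ) = 0 := by exact_mod_cast h1
        rw [hc, zero_mul] at hrow ⊢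
        exact hrow
    have := hmhi this
    have := abs_nonneg x0
    linarith
  set lq : ℚ := N0.sup' hN0ne (fun p => p.2 / p.1 0) with hlqdef
  set uq : ℚ := P0.inf' hP0ne (fun p => p.2 / p.1 0) with huqdef
  have hDicc : D = Set.Icc (lq : ℝ) (uq : ℝ) := by
    ext x
    rw [hDrows x]
    constructor
    · intro hrows
      constructor
      · rw [hlqdef, rat_cast_sup']
        apply Finset.sup'_le
        intro p hp
        have hplt : p.1 0 < 0 := (Finset.mem_filter.mp hp).2
        have hpF : p ∈ F0 := (Finset.mem_filter.mp hp).1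
        have hrow := hrows p hpF
        have hc : (p.1 0 : ℝ) < 0 := by exact_mod_cast hplt
        rw [Rat.cast_div, div_le_iff_of_neg hc]
        linarith [hrow]
      · rw [huqdef, rat_cast_inf']
        apply Finset.le_inf'
        intro p hp
        have hplt : 0 < p.1 0 := (Finset.mem_filter.mp hp).2
        have hpF : p ∈ F0 := (Finset.mem_filter.mp hp).1
        have hrow := hrows p hpF
        have hc : (0:ℝ) < (p.1 0 : ℝ) := by exact_mod_cast hplt
        rw [Rat.cast_div, le_div_iff₀ hc]
        linarith [hrow]
    · rintro ⟨hxl, hxu⟩ p hp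
      rcases lt_trichotomy (p.1 0) 0 with hc | hc | hc
      · have hmem : p ∈ N0 := by rw [hN0def, Finset.mem_filter]; exact ⟨hp, hc⟩
        have hle : ((p.2 / p.1 0 : ℚ) : ℝ) ≤ (lq : ℝ) := by
          exact_mod_cast Finset.le_sup' (fun p => p.2 / p.1 0) hmem
        have hcr : (p.1 0 : ℝ) < 0 := by exact_mod_cast hc
        have : ((p.2 : ℝ) / (p.1 0 : ℝ)) ≤ x := by
          rw [← Rat.cast_div]
          linarith
        rw [div_le_iff_of_neg hcr] at this
        linarith
      · have hcr : (p.1 0 : ℝ) = 0 := by exact_mod_cast hc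
        rw [hcr, zero_mul]
        have hrow := (hDrows x0).mp hx0 p hp
        rw [hcr, zero_mul] at hrow
        exact hrow
      · have hmem : p ∈ P0 := by rw [hP0def, Finset.mem_filter]; exact ⟨hp, hc⟩
        have hle : (uq : ℝ) ≤ ((p.2 / p.1 0 : ℚ) : ℝ) := by
          exact_mod_cast Finset.inf'_le (fun p => p.2 / p.1 0) hmem
        have hcr : (0:ℝ) < (p.1 0 : ℝ) := by exact_mod_cast hc
        have : x ≤ ((p.2 : ℝ) / (p.1 0 : ℝ)) := by
          rw [← Rat.cast_div]
          linarith
        rw [le_div_iff₀ hcr] at this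
        linarith
  have hlu : (lq : ℝ) ≤ (uq : ℝ) := by
    have := hx0
    rw [hDicc] at this
    exact le_trans this.1 this.2
  have hleq : l = (lq : ℝ) := by rw [hl, hDicc, csInf_Icc hlu]
  have hueq : u = (uq : ℝ) := by rw [hu, hDicc, csSup_Icc hlu]
  -- ================= Stage B: value function formulas =================
  choose zf hzf using hLL
  choose zg hzg hzgmin using hψ
  have hALmem : ∀ (x : ℝ) (z : Fin nb → ℝ), z ∈ AL x ↔ z ∈ LL x ∧
      ∀ y ∈ LL x, ∑ k, (c11 k : ℝ) * z k ≤ ∑ k, (c11 k : ℝ) * y k := by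
    intro x z; exact Iff.rfl
  have hpsival : ∀ (x : ℝ) (hx : x ∈ D),
      psi nb mb mb' c11 c21 c22 A11 A12 b1 A12' b1' x
        = ∑ k, (c21 k : ℝ) * zg x hx k + (c22 : ℝ) * x := by
    intro x hx
    refine IsLeast.csInf_eq ⟨⟨zg x hx, hzg x hx, rfl⟩, ?_⟩
    rintro y ⟨z, hz, rfl⟩
    exact hzgmin x hx z hz
  have hE1char : ∀ (x : ℝ) (hx : x ∈ D) (t : ℝ),
      (![x, t] ∈ E1 ↔ (∑ k, (c11 k : ℝ) * zf x hx k) ≤ t) := by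
    intro x hx t
    rw [hE1mem]
    simp only [Matrix.cons_val_zero, Matrix.cons_val_one, Matrix.head_cons]
    constructor
    · rintro ⟨z, hz1, hz2⟩
      exact le_trans (((hALmem x (zf x hx)).mp (hzf x hx)).2 z hz1) hz2
    · intro hle
      exact ⟨zf x hx, ((hALmem x (zf x hx)).mp (hzf x hx)).1, hle⟩
  obtain ⟨F1, hF1⟩ := hE1poly
  have hE1rows : ∀ (x t : ℝ), ![x, t] ∈ E1 ↔
      ∀ p ∈ F1, (p.1 0 : ℝ) * x + (p.1 1 : ℝ) * t ≤ (p.2 : ℝ) := by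
    intro x t
    rw [hF1]
    simp [Hs, Fin.sum_univ_two]
  have hF1np : ∀ p ∈ F1, p.1 1 ≤ 0 := by
    intro p hp
    by_contra hpos
    push_neg at hpos
    have hc : (0:ℝ) < (p.1 1 : ℝ) := by exact_mod_cast hpos
    set t2 : ℝ := ((p.2 : ℝ) + 1 - (p.1 0 : ℝ) * x0) / (p.1 1 : ℝ) with ht2
    set t := max (∑ k, (c11 k : ℝ) * zf x0 hx0 k) t2 with ht
    have hmem : ![x0, t] ∈ E1 := (hE1char x0 hx0 t).mpr (le_max_left _ _)
    have hrow := (hE1rows x0 t).mp hmem p hp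
    have h2 : (p.1 1 : ℝ) * t2 ≤ (p.1 1 : ℝ) * t :=
      mul_le_mul_of_nonneg_left (le_max_right _ _) (le_of_lt hc)
    have e : (p.1 1 : ℝ) * t2 = (p.2 : ℝ) + 1 - (p.1 0 : ℝ) * x0 := by
      rw [ht2, mul_div_cancel₀ _ (ne_of_gt hc)]
    rw [e] at h2
    linarith
  set cN1 := F1.filter (fun p => p.1 1 < 0) with hcN1def
  have hN1ne : cN1.Nonempty := by
    by_contra hemp
    rw [Finset.not_nonempty_iff_eq_empty] at hemp
    have hz0 : ∀ p ∈ F1, (p.1 1 : ℚ) = 0 := by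
      intro p hp
      rcases lt_or_eq_of_le (hF1np p hp) with h1 | h1
      · exfalso
        have : p ∈ cN1 := by rw [hcN1def, Finset.mem_filter]; exact ⟨hp, h1⟩
        rw [hemp] at this
        exact absurd this (Finset.notMem_empty p)
      · exact h1
    set vx0 := ∑ k, (c11 k : ℝ) * zf x0 hx0 k with hvx0
    have hm1 : ![x0, vx0] ∈ E1 := (hE1char x0 hx0 vx0).mpr le_rfl
    have hm2 : ![x0, vx0 - 1] ∈ E1 := by
      rw [hE1rows]
      intro p hp
      have h1 := (hE1rows x0 vx0).mp hm1 p hp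
      have h2 : (p.1 1 : ℝ) = 0 := by exact_mod_cast hz0 p hp
      rw [h2, zero_mul] at h1 ⊢
      exact h1
    have := (hE1char x0 hx0 (vx0 - 1)).mp hm2
    linarith
  have hvform : ∀ (x : ℝ) (hx : x ∈ D),
      ∑ k, (c11 k : ℝ) * zf x hx k
        = cN1.sup' hN1ne (fun p => ((p.1 0 / (-(p.1 1)) : ℚ) : ℝ) * x + ((p.2 / p.1 1 : ℚ) : ℝ)) := by
    intro x hx
    apply le_antisymm
    · set T := cN1.sup' hN1ne
        (fun p => ((p.1 0 / (-(p.1 1)) : ℚ) : ℝ) * x + ((p.2 / p.1 1 : ℚ) : ℝ)) with hT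
      refine (hE1char x hx T).mp ?_
      rw [hE1rows]
      intro p hp
      rcases lt_trichotomy (p.1 1) 0 with hc | hc | hc
      · have hmem : p ∈ cN1 := by rw [hcN1def, Finset.mem_filter]; exact ⟨hp, hc⟩
        have hterm := Finset.le_sup'
          (fun p => ((p.1 0 / (-(p.1 1)) : ℚ) : ℝ) * x + ((p.2 / p.1 1 : ℚ) : ℝ)) hmem
        rw [← hT] at hterm
        have hcr : (p.1 1 : ℝ) < 0 := by exact_mod_cast hc
        have hterm' : (p.1 0 : ℝ) / (-(p.1 1 : ℝ)) * x + (p.2 : ℝ) / (p.1 1 : ℝ) ≤ T := by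
          convert hterm using 2
          · rfl
          all_goals (push_cast; ring)
        exact (affdiv2 hcr).mp hterm'
      · have h1 := (hE1rows x _).mp ((hE1char x hx _).mpr le_rfl) p hp
        have h2 : (p.1 1 : ℝ) = 0 := by exact_mod_cast hc
        rw [h2, zero_mul] at h1 ⊢
        exact h1
      · exact absurd hc (not_lt.mpr (hF1np p hp))
    · apply Finset.sup'_le
      intro p hp
      have hpF : p ∈ F1 := (Finset.mem_filter.mp hp).1
      have hc : p.1 1 < 0 := (Finset.mem_filter.mp hp).2
      have hcr : (p.1 1 : ℝ) < 0 := by exact_mod_cast hc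
      have h1 := (hE1rows x _).mp ((hE1char x hx _).mpr le_rfl) p hpF
      have h2 := (affdiv2 hcr).mpr h1
      calc ((p.1 0 / (-(p.1 1)) : ℚ) : ℝ) * x + ((p.2 / p.1 1 : ℚ) : ℝ)
          = (p.1 0 : ℝ) / (-(p.1 1 : ℝ)) * x + (p.2 : ℝ) / (p.1 1 : ℝ) := by push_cast; ring
        _ ≤ _ := h2
  -- E2 characterization
  have hE2char : ∀ (x : ℝ) (hx : x ∈ D) (t : ℝ),
      (![x, ∑ k, (c11 k : ℝ) * zf x hx k, t] ∈ E2 ↔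
        psi nb mb mb' c11 c21 c22 A11 A12 b1 A12' b1' x ≤ t) := by
    intro x hx t
    rw [hE2mem]
    simp only [Matrix.cons_val_zero, Matrix.cons_val_one, Matrix.head_cons]
    constructor
    · rintro ⟨z, hz1, hz2, hz3⟩
      have hzAL : z ∈ AL x := by
        rw [hALmem]
        refine ⟨hz1, fun y hy => ?_⟩
        calc ∑ k, (c11 k : ℝ) * z k ≤ ∑ k, (c11 k : ℝ) * zf x hx k := by
              have := hz2
              try simp only [Matrix.cons_val_two, Matrix.tail_cons, Matrix.head_cons] at this
              exact this
          _ ≤ ∑ k, (c11 k : ℝ) * y k := ((hALmem x (zf x hx)).mp (hzf x hx)).2 y hy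
      have h3 : ∑ k, (c21 k : ℝ) * z k + (c22 : ℝ) * x ≤ t := by
        have := hz3
        try simp only [Matrix.cons_val_two, Matrix.tail_cons, Matrix.head_cons] at this
        exact this
      rw [hpsival x hx]
      exact le_trans (hzgmin x hx z hzAL) h3
    · intro hle
      refine ⟨zg x hx, ((hALmem x (zg x hx)).mp (hzg x hx)).1, ?_, ?_⟩
      · try simp only [Matrix.cons_val_two, Matrix.tail_cons, Matrix.head_cons]
        exact ((hALmem x (zg x hx)).mp (hzg x hx)).2 (zf x hx)
          ((hALmem x (zf x hx)).mp (hzf x hx)).1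
      · try simp only [Matrix.cons_val_two, Matrix.tail_cons, Matrix.head_cons]
        rw [← hpsival x hx]
        exact hle
  obtain ⟨F2, hF2⟩ := hE2poly
  have hE2rows : ∀ (x s t : ℝ), ![x, s, t] ∈ E2 ↔
      ∀ p ∈ F2, (p.1 0 : ℝ) * x + (p.1 1 : ℝ) * s + (p.1 2 : ℝ) * t ≤ (p.2 : ℝ) := by
    intro x s t
    rw [hF2]
    simp [Hs, Fin.sum_univ_three]
  have hF2np : ∀ p ∈ F2, p.1 2 ≤ 0 := by
    intro p hp
    by_contra hpos
    push_neg at hpos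
    have hc : (0:ℝ) < (p.1 2 : ℝ) := by exact_mod_cast hpos
    set s0 := ∑ k, (c11 k : ℝ) * zf x0 hx0 k with hs0
    set t2 : ℝ := ((p.2 : ℝ) + 1 - (p.1 0 : ℝ) * x0 - (p.1 1 : ℝ) * s0) / (p.1 2 : ℝ) with ht2
    set t := max (psi nb mb mb' c11 c21 c22 A11 A12 b1 A12' b1' x0) t2 with ht
    have hmem : ![x0, s0, t] ∈ E2 := (hE2char x0 hx0 t).mpr (le_max_left _ _)
    have hrow := (hE2rows x0 s0 t).mp hmem p hp
    have h2 : (p.1 2 : ℝ) * t2 ≤ (p.1 2 : ℝ) * t :=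
      mul_le_mul_of_nonneg_left (le_max_right _ _) (le_of_lt hc)
    have e : (p.1 2 : ℝ) * t2 = (p.2 : ℝ) + 1 - (p.1 0 : ℝ) * x0 - (p.1 1 : ℝ) * s0 := by
      rw [ht2, mul_div_cancel₀ _ (ne_of_gt hc)]
    rw [e] at h2
    linarith
  set cN2 := F2.filter (fun p => p.1 2 < 0) with hcN2def
  have hN2ne : cN2.Nonempty := by
    by_contra hemp
    rw [Finset.not_nonempty_iff_eq_empty] at hemp
    have hz0 : ∀ p ∈ F2, (p.1 2 : ℚ) = 0 := by
      intro p hp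
      rcases lt_or_eq_of_le (hF2np p hp) with h1 | h1
      · exfalso
        have : p ∈ cN2 := by rw [hcN2def, Finset.mem_filter]; exact ⟨hp, h1⟩
        rw [hemp] at this
        exact absurd this (Finset.notMem_empty p)
      · exact h1
    set s0 := ∑ k, (c11 k : ℝ) * zf x0 hx0 k with hs0
    set q0 := psi nb mb mb' c11 c21 c22 A11 A12 b1 A12' b1' x0 with hq0
    have hm1 : ![x0, s0, q0] ∈ E2 := (hE2char x0 hx0 q0).mpr le_rfl
    have hm2 : ![x0, s0, q0 - 1] ∈ E2 := by
      rw [hE2rows]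
      intro p hp
      have h1 := (hE2rows x0 s0 q0).mp hm1 p hp
      have h2 : (p.1 2 : ℝ) = 0 := by exact_mod_cast hz0 p hp
      rw [h2, zero_mul] at h1 ⊢
      exact h1
    have := (hE2char x0 hx0 (q0 - 1)).mp hm2
    linarith
  have hpform : ∀ (x : ℝ) (hx : x ∈ D),
      psi nb mb mb' c11 c21 c22 A11 A12 b1 A12' b1' x
        = cN2.sup' hN2ne (fun p => ((p.1 0 / (-(p.1 2)) : ℚ) : ℝ) * x
            + ((p.1 1 / (-(p.1 2)) : ℚ) : ℝ) * (∑ k, (c11 k : ℝ) * zf x hx k)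
            + ((p.2 / p.1 2 : ℚ) : ℝ)) := by
    intro x hx
    set vx := ∑ k, (c11 k : ℝ) * zf x hx k with hvx
    apply le_antisymm
    · set T := cN2.sup' hN2ne (fun p => ((p.1 0 / (-(p.1 2)) : ℚ) : ℝ) * x
            + ((p.1 1 / (-(p.1 2)) : ℚ) : ℝ) * vx + ((p.2 / p.1 2 : ℚ) : ℝ)) with hT
      refine (hE2char x hx T).mp ?_
      rw [hE2rows]
      intro p hp
      rcases lt_trichotomy (p.1 2) 0 with hc | hc | hc
      · have hmem : p ∈ cN2 := by rw [hcN2def, Finset.mem_filter]; exact ⟨hp, hc⟩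
        have hterm := Finset.le_sup' (fun p => ((p.1 0 / (-(p.1 2)) : ℚ) : ℝ) * x
            + ((p.1 1 / (-(p.1 2)) : ℚ) : ℝ) * vx + ((p.2 / p.1 2 : ℚ) : ℝ)) hmem
        rw [← hT] at hterm
        have hcr : (p.1 2 : ℝ) < 0 := by exact_mod_cast hc
        have hterm' : (p.1 0 : ℝ) / (-(p.1 2 : ℝ)) * x + (p.1 1 : ℝ) / (-(p.1 2 : ℝ)) * vx
            + (p.2 : ℝ) / (p.1 2 : ℝ) ≤ T := by
          convert hterm using 2
          · rfl
          all_goals (push_cast; ring)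
        exact (affdiv3 hcr).mp hterm'
      · have h1 := (hE2rows x vx _).mp ((hE2char x hx _).mpr le_rfl) p hp
        have h2 : (p.1 2 : ℝ) = 0 := by exact_mod_cast hc
        rw [h2, zero_mul] at h1 ⊢
        exact h1
      · exact absurd hc (not_lt.mpr (hF2np p hp))
    · apply Finset.sup'_le
      intro p hp
      have hpF : p ∈ F2 := (Finset.mem_filter.mp hp).1
      have hc : p.1 2 < 0 := (Finset.mem_filter.mp hp).2
      have hcr : (p.1 2 : ℝ) < 0 := by exact_mod_cast hc
      have h1 := (hE2rows x vx _).mp ((hE2char x hx _).mpr le_rfl) p hpF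
      have h2 := (affdiv3 hcr).mpr h1
      calc ((p.1 0 / (-(p.1 2)) : ℚ) : ℝ) * x + ((p.1 1 / (-(p.1 2)) : ℚ) : ℝ) * vx
            + ((p.2 / p.1 2 : ℚ) : ℝ)
          = (p.1 0 : ℝ) / (-(p.1 2 : ℝ)) * x + (p.1 1 : ℝ) / (-(p.1 2 : ℝ)) * vx
            + (p.2 : ℝ) / (p.1 2 : ℝ) := by push_cast; ring
        _ ≤ _ := h2
  -- ================= Stage C: breakpoints =================
  have hlque : lq ≤ uq := by exact_mod_cast hlu
  set aV : ((Fin 2 → ℚ) × ℚ) → ℚ × ℚ := fun p => (p.1 0 / (-(p.1 1)), p.2 / p.1 1) with haV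
  set aP : ((Fin 3 → ℚ) × ℚ) → ((Fin 2 → ℚ) × ℚ) → ℚ × ℚ := fun i j =>
    (i.1 0 / (-(i.1 2)) + (i.1 1 / (-(i.1 2))) * (aV j).1,
     (i.1 1 / (-(i.1 2))) * (aV j).2 + i.2 / i.1 2) with haP
  set root2 : ℚ × ℚ → ℚ × ℚ → ℚ := fun a b => (b.2 - a.2) / (a.1 - b.1) with hroot2
  set BB : Finset ℚ := insert lq (insert uq
    (((cN1 ×ˢ cN1).image (fun pq => root2 (aV pq.1) (aV pq.2))) ∪
     (((cN2 ×ˢ cN1) ×ˢ (cN2 ×ˢ cN1)).image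
       (fun pq => root2 (aP pq.1.1 pq.1.2) (aP pq.2.1 pq.2.2))))) with hBB
  set B' : Finset ℚ := BB.filter (fun q => lq ≤ q ∧ q ≤ uq) with hB'
  have hlqB' : lq ∈ B' := by
    rw [hB']
    exact Finset.mem_filter.mpr ⟨by rw [hBB]; exact Finset.mem_insert_self _ _,
      ⟨le_refl lq, hlque⟩⟩
  have huqB' : uq ∈ B' := by
    rw [hB']
    exact Finset.mem_filter.mpr
      ⟨by rw [hBB]; exact Finset.mem_insert_of_mem (Finset.mem_insert_self _ _),
       ⟨hlque, le_refl uq⟩⟩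
  set Ls := B'.sort (· ≤ ·) with hLs
  have hkpos : 1 ≤ Ls.length := by
    rw [hLs, Finset.length_sort]
    exact Finset.card_pos.mpr ⟨lq, hlqB'⟩
  have hsorted : Ls.Pairwise (· ≤ ·) := by rw [hLs]; exact Finset.pairwise_sort _ _
  have hmemLs : ∀ q : ℚ, q ∈ Ls ↔ q ∈ B' := by
    intro q; rw [hLs]; exact Finset.mem_sort _
  have hget_mono : ∀ (i j : Fin Ls.length), i ≤ j → Ls.get i ≤ Ls.get j := by
    intro i j hij
    rcases eq_or_lt_of_le hij with h | h
    · rw [h]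
    · exact hsorted.rel_get_of_lt h
  have hentry : ∀ i : Fin Ls.length, lq ≤ Ls.get i ∧ Ls.get i ≤ uq := by
    intro i
    have hmem : Ls.get i ∈ Ls := by
      have := List.get_mem Ls i
      simpa using this
    have := (hmemLs _).mp hmem
    rw [hB'] at this
    exact (Finset.mem_filter.mp this).2
  set τ : Fin (Ls.length + 1) → ℚ :=
    fun j => if h : (j : ℕ) < Ls.length then Ls.get ⟨j, h⟩ else uq with hτdef
  have hτ0 : τ 0 = lq := by
    have h0 : (((0 : Fin (Ls.length+1))) : ℕ) < Ls.length := by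
      simp only [Fin.val_zero]; omega
    rw [hτdef]
    simp only [dif_pos h0]
    apply le_antisymm
    · obtain ⟨n, hn⟩ := List.mem_iff_get.mp ((hmemLs lq).mpr hlqB')
      calc Ls.get ⟨(0 : Fin (Ls.length+1)), h0⟩ ≤ Ls.get n :=
            hget_mono _ n (by simp [Fin.le_def])
        _ = lq := hn
    · exact (hentry _).1
  have hτlast : τ (Fin.last Ls.length) = uq := by
    rw [hτdef]
    simp only [Fin.val_last]
    rw [dif_neg (lt_irrefl _)]
  have hτmono : Monotone τ := by
    intro i j hij
    have hijn : (i : ℕ) ≤ (j : ℕ) := hij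
    rw [hτdef]
    by_cases hi : (i : ℕ) < Ls.length
    · by_cases hj : (j : ℕ) < Ls.length
      · simp only [dif_pos hi, dif_pos hj]
        exact hget_mono ⟨i, hi⟩ ⟨j, hj⟩ hijn
      · simp only [dif_pos hi, dif_neg hj]
        exact (hentry _).2
    · have hj : ¬ (j : ℕ) < Ls.length := fun hjl => hi (lt_of_le_of_lt hijn hjl)
      simp only [dif_neg hi, dif_neg hj, le_refl]
  have hτlb : ∀ j, lq ≤ τ j := by
    intro j
    rw [hτdef]
    by_cases h : (j : ℕ) < Ls.length
    · simp only [dif_pos h]; exact (hentry _).1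
    · simp only [dif_neg h]; exact hlque
  have hτub : ∀ j, τ j ≤ uq := by
    intro j
    rw [hτdef]
    by_cases h : (j : ℕ) < Ls.length
    · simp only [dif_pos h]; exact (hentry _).2
    · simp only [dif_neg h]
      exact le_rfl
  have hnoroot : ∀ (j : Fin Ls.length) (ρ : ℚ), ρ ∈ BB →
      ¬(τ j.castSucc < ρ ∧ ρ < τ j.succ) := by
    rintro j ρ hρ ⟨h1, h2⟩
    have hjlt : (j : ℕ) < Ls.length := j.isLt
    have hτcs : τ j.castSucc = Ls.get ⟨j, hjlt⟩ := by
      rw [hτdef]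
      simp only [Fin.coe_castSucc, dif_pos hjlt]
    by_cases hin : lq ≤ ρ ∧ ρ ≤ uq
    · have hρB' : ρ ∈ B' := by
        rw [hB']; exact Finset.mem_filter.mpr ⟨hρ, hin⟩
      obtain ⟨n, hn⟩ := List.mem_iff_get.mp ((hmemLs ρ).mpr hρB')
      have hjn : (j : ℕ) < (n : ℕ) := by
        by_contra hle
        push_neg at hle
        have := hget_mono n ⟨j, hjlt⟩ hle
        rw [hn, ← hτcs] at this
        exact absurd h1 (not_lt.mpr this)
      by_cases hjs : ((j : ℕ) + 1) < Ls.length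
      · have hτs : τ j.succ = Ls.get ⟨(j : ℕ) + 1, hjs⟩ := by
          rw [hτdef]
          simp only [Fin.val_succ, dif_pos hjs]
        have hnj : (n : ℕ) < (j : ℕ) + 1 := by
          by_contra hge
          push_neg at hge
          have hmono := hget_mono ⟨(j : ℕ) + 1, hjs⟩ n hge
          rw [hn] at hmono
          rw [hτs] at h2
          exact absurd h2 (not_lt.mpr hmono)
        omega
      · exact hjs (lt_of_le_of_lt (by omega) n.isLt)
    · push_neg at hin
      rcases lt_or_ge ρ lq with hlo | hge
      · exact absurd h1 (not_lt.mpr (le_trans (le_of_lt hlo) (hτlb _)))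
      · exact absurd h2 (not_lt.mpr (le_trans (hτub _) (le_of_lt (hin hge))))
  -- ================= Stage D: affine pieces =================
  have hpieces : ∀ j : Fin Ls.length, ∃ α β : ℝ,
      ∀ x ∈ Set.Icc ((τ j.castSucc : ℚ) : ℝ) ((τ j.succ : ℚ) : ℝ),
        psi nb mb mb' c11 c21 c22 A11 A12 b1 A12' b1' x = α * x + β := by
    intro j
    have hab : τ j.castSucc ≤ τ j.succ := hτmono (le_of_lt (Fin.castSucc_lt_succ (i := j)))
    rcases eq_or_lt_of_le hab with heq | hlt
    · refine ⟨0, psi nb mb mb' c11 c21 c22 A11 A12 b1 A12' b1' ((τ j.castSucc : ℚ) : ℝ), ?_⟩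
      intro x hx
      have hxa : x = ((τ j.castSucc : ℚ) : ℝ) := by
        have h1 := hx.1
        have h2 := hx.2
        rw [← heq] at h2
        exact le_antisymm h2 h1
      rw [hxa, zero_mul, zero_add]
    · set aq := τ j.castSucc with haq
      set bq := τ j.succ with hbq
      set mq := (aq + bq) / 2 with hmq
      have hma : aq < mq := by rw [hmq]; linarith
      have hmb : mq < bq := by rw [hmq]; linarith
      have hmD : ((mq : ℚ) : ℝ) ∈ D := by
        rw [hDicc]
        constructor
        · exact_mod_cast le_trans (hτlb j.castSucc) (le_of_lt hma)
        · exact_mod_cast le_trans (le_of_lt hmb) (hτub j.succ)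
      obtain ⟨js, hjs, hjseq⟩ := Finset.exists_mem_eq_sup' hN1ne
        (fun p => ((p.1 0 / (-(p.1 1)) : ℚ) : ℝ) * ((mq : ℚ) : ℝ) + ((p.2 / p.1 1 : ℚ) : ℝ))
      have hvpiece : ∀ (x : ℝ) (hx : x ∈ D), ((aq : ℚ) : ℝ) ≤ x → x ≤ ((bq : ℚ) : ℝ) →
          ∑ k, (c11 k : ℝ) * zf x hx k
            = ((js.1 0 / (-(js.1 1)) : ℚ) : ℝ) * x + ((js.2 / js.1 1 : ℚ) : ℝ) := by
        intro x hx hax hxb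
        rw [hvform x hx]
        apply le_antisymm
        · apply Finset.sup'_le
          intro p hp
          have hmle : ((p.1 0 / (-(p.1 1)) : ℚ) : ℝ) * ((mq : ℚ) : ℝ) + ((p.2 / p.1 1 : ℚ) : ℝ)
              ≤ ((js.1 0 / (-(js.1 1)) : ℚ) : ℝ) * ((mq : ℚ) : ℝ) + ((js.2 / js.1 1 : ℚ) : ℝ) := by
            have h1 := Finset.le_sup' (fun p => ((p.1 0 / (-(p.1 1)) : ℚ) : ℝ) * ((mq : ℚ) : ℝ)
              + ((p.2 / p.1 1 : ℚ) : ℝ)) hp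
            rw [hjseq] at h1
            exact h1
          refine affine_le_on_interval (ρ := ((root2 (aV p) (aV js) : ℚ) : ℝ))
            (by exact_mod_cast hma) (by exact_mod_cast hmb) hax hxb hmle ?_ ?_
          · intro _
            simp only [hroot2, haV]
            push_cast
            ring
          · rintro ⟨c1, c2⟩
            refine hnoroot j (root2 (aV p) (aV js)) ?_
              ⟨by exact_mod_cast c1, by exact_mod_cast c2⟩
            rw [hBB]
            refine Finset.mem_insert_of_mem (Finset.mem_insert_of_mem ?_)
            refine Finset.mem_union_left _ ?_
            exact Finset.mem_image.mpr ⟨(p, js), Finset.mem_product.mpr ⟨hp, hjs⟩, rfl⟩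
        · exact Finset.le_sup'
            (fun p => ((p.1 0 / (-(p.1 1)) : ℚ) : ℝ) * x + ((p.2 / p.1 1 : ℚ) : ℝ)) hjs
      have hppiece : ∀ (x : ℝ) (hx : x ∈ D), ((aq : ℚ) : ℝ) ≤ x → x ≤ ((bq : ℚ) : ℝ) →
          psi nb mb mb' c11 c21 c22 A11 A12 b1 A12' b1' x
            = cN2.sup' hN2ne (fun p => ((aP p js).1 : ℝ) * x + ((aP p js).2 : ℝ)) := by
        intro x hx hax hxb
        rw [hpform x hx]
        rw [hvpiece x hx hax hxb]
        refine Finset.sup'_congr hN2ne rfl ?_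
        intro p hp
        simp only [haP, haV]
        push_cast
        ring
      obtain ⟨is, his, hiseq⟩ := Finset.exists_mem_eq_sup' hN2ne
        (fun p => ((aP p js).1 : ℝ) * ((mq : ℚ) : ℝ) + ((aP p js).2 : ℝ))
      refine ⟨((aP is js).1 : ℝ), ((aP is js).2 : ℝ), ?_⟩
      intro x hx
      have hxD : x ∈ D := by
        rw [hDicc]
        exact ⟨le_trans (by exact_mod_cast hτlb j.castSucc) hx.1,
               le_trans hx.2 (by exact_mod_cast hτub j.succ)⟩
      rw [hppiece x hxD hx.1 hx.2]
      apply le_antisymm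
      · apply Finset.sup'_le
        intro p hp
        have hmle : ((aP p js).1 : ℝ) * ((mq : ℚ) : ℝ) + ((aP p js).2 : ℝ)
            ≤ ((aP is js).1 : ℝ) * ((mq : ℚ) : ℝ) + ((aP is js).2 : ℝ) := by
          have h1 := Finset.le_sup'
            (fun p => ((aP p js).1 : ℝ) * ((mq : ℚ) : ℝ) + ((aP p js).2 : ℝ)) hp
          rw [hiseq] at h1
          exact h1
        refine affine_le_on_interval (ρ := ((root2 (aP p js) (aP is js) : ℚ) : ℝ))
          (by exact_mod_cast hma) (by exact_mod_cast hmb) hx.1 hx.2 hmle ?_ ?_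
        · intro _
          simp only [hroot2]
          push_cast
          ring
        · rintro ⟨c1, c2⟩
          refine hnoroot j (root2 (aP p js) (aP is js)) ?_
            ⟨by exact_mod_cast c1, by exact_mod_cast c2⟩
          rw [hBB]
          refine Finset.mem_insert_of_mem (Finset.mem_insert_of_mem ?_)
          refine Finset.mem_union_right _ ?_
          exact Finset.mem_image.mpr ⟨((p, js), (is, js)),
            Finset.mem_product.mpr ⟨Finset.mem_product.mpr ⟨hp, hjs⟩,
              Finset.mem_product.mpr ⟨his, hjs⟩⟩, rfl⟩
      · exact Finset.le_sup' (fun p => ((aP p js).1 : ℝ) * x + ((aP p js).2 : ℝ)) his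
  refine ⟨⟨lq, hleq⟩, ⟨uq, hueq⟩, by rw [hDicc, hleq, hueq], ?_, ?_⟩
  · refine ⟨Ls.length, hkpos, τ, ?_, ?_, ?_, hpieces⟩
    · intro i j hij
      dsimp only
      exact_mod_cast hτmono hij
    · rw [hτ0]; exact hleq.symm
    · rw [hτlast]; exact hueq.symm
  · -- continuity
    have hstep : ∀ (mI : ℕ) (hmI : mI ≤ Ls.length),
        ContinuousOn (psi nb mb mb' c11 c21 c22 A11 A12 b1 A12' b1')
          (Set.Icc ((τ 0 : ℚ) : ℝ) ((τ ⟨mI, by omega⟩ : ℚ) : ℝ)) := by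
      intro mI
      induction mI with
      | zero =>
        intro h0
        have he : (⟨0, by omega⟩ : Fin (Ls.length + 1)) = 0 := rfl
        rw [he, Set.Icc_self]
        exact continuousOn_singleton _ _
      | succ mI ih =>
        intro hsucc
        have hmle : mI ≤ Ls.length := by omega
        have hjlt : mI < Ls.length := by omega
        have ihc := ih hmle
        obtain ⟨α, β, hαβ⟩ := hpieces ⟨mI, hjlt⟩
        have hcs : (Fin.castSucc ⟨mI, hjlt⟩) = (⟨mI, by omega⟩ : Fin (Ls.length + 1)) := by
          apply Fin.ext; simp
        have hsc : (Fin.succ ⟨mI, hjlt⟩) = (⟨mI + 1, by omega⟩ : Fin (Ls.length + 1)) := by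
          apply Fin.ext; simp
        rw [hcs, hsc] at hαβ
        have hpc : ContinuousOn (psi nb mb mb' c11 c21 c22 A11 A12 b1 A12' b1')
            (Set.Icc ((τ ⟨mI, by omega⟩ : ℚ) : ℝ) ((τ ⟨mI + 1, by omega⟩ : ℚ) : ℝ)) := by
          refine ContinuousOn.congr ?_ (fun x hx => hαβ x hx)
          exact Continuous.continuousOn (by fun_prop)
        have hle1 : ((τ 0 : ℚ) : ℝ) ≤ ((τ ⟨mI, by omega⟩ : ℚ) : ℝ) := by
          have : (0 : Fin (Ls.length + 1)) ≤ ⟨mI, by omega⟩ := by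
            simp [Fin.le_def]
          exact_mod_cast hτmono this
        have hle2 : ((τ ⟨mI, by omega⟩ : ℚ) : ℝ) ≤ ((τ ⟨mI + 1, by omega⟩ : ℚ) : ℝ) := by
          have : (⟨mI, by omega⟩ : Fin (Ls.length + 1)) ≤ ⟨mI + 1, by omega⟩ := by
            simp [Fin.le_def]
          exact_mod_cast hτmono this
        rw [← Set.Icc_union_Icc_eq_Icc hle1 hle2]
        exact paste_closed isClosed_Icc isClosed_Icc ihc hpc
    have hfin := hstep Ls.length le_rfl
    have hlast : (⟨Ls.length, by omega⟩ : Fin (Ls.length + 1)) = Fin.last Ls.length := rfl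
    rw [hlast, hτlast, hτ0] at hfin
    rw [hleq, hueq]
    exact hfin
end
end

section
/- If the bilevel program (P_single) with rational data has a locally optimal solution, then it has a locally optimal solution all of whose coordinates are rational. -/
noncomputable section

/-- The feasible set `F` of the bilevel program `(P_single)`. -/
def PsF (n m : ℕ) (c11 : Fin n → ℚ) (A11 : Matrix (Fin m) (Fin n) ℚ)
    (A12 b1 : Fin m → ℚ) : Set ((Fin n → ℝ) × ℝ) :=
  {x | 0 ≤ x.2 ∧ x.2 ≤ 1 ∧
       (∀ j, (b1 j : ℝ) ≤ ∑ k, (A11 j k : ℝ) * x.1 k + (A12 j : ℝ) * x.2) ∧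
       (∀ k, 0 ≤ x.1 k ∧ x.1 k ≤ 1) ∧
       ∀ y : Fin n → ℝ,
         ((∀ j, (b1 j : ℝ) ≤ ∑ k, (A11 j k : ℝ) * y k + (A12 j : ℝ) * x.2) ∧
           ∀ k, 0 ≤ y k ∧ y k ≤ 1) →
         ∑ k, (c11 k : ℝ) * x.1 k ≤ ∑ k, (c11 k : ℝ) * y k}

/-- The objective of `(P_single)`. -/
def PsObj (n : ℕ) (c21 : Fin n → ℚ) (c22 : ℚ) (x : (Fin n → ℝ) × ℝ) : ℝ :=
  ∑ k, (c21 k : ℝ) * x.1 k + (c22 : ℝ) * x.2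

/-- `(x̄1, x̄2)` is a locally optimal solution of `(P_single)`: it is feasible and
minimizes the objective among feasible points within `ℓ^∞`-distance `ε` of it, for
some `ε > 0`. -/
def IsLocalOpt (n m : ℕ) (c11 c21 : Fin n → ℚ) (c22 : ℚ)
    (A11 : Matrix (Fin m) (Fin n) ℚ) (A12 b1 : Fin m → ℚ)
    (xb : (Fin n → ℝ) × ℝ) : Prop :=
  xb ∈ PsF n m c11 A11 A12 b1 ∧
  ∃ ε : ℝ, 0 < ε ∧ ∀ x ∈ PsF n m c11 A11 A12 b1,
    ((∀ i, |x.1 i - xb.1 i| ≤ ε) ∧ |x.2 - xb.2| ≤ ε) →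
    PsObj n c21 c22 xb ≤ PsObj n c21 c22 x

lemma ratDense {N : ℕ} : ∀ (r : ℕ) (a : Fin r → Fin N → ℚ) (b : Fin r → ℚ)
    (x : Fin N → ℝ), (∀ j, ∑ k, (a j k : ℝ) * x k = (b j : ℝ)) →
    ∀ δ : ℝ, 0 < δ → ∃ q : Fin N → ℚ,
      (∀ j, ∑ k, a j k * q k = b j) ∧ ∀ k, |(q k : ℝ) - x k| < δ := by
  intro r
  induction r with
  | zero =>
    intro a b x _ δ hδ
    choose q hq using fun k => exists_rat_near (x k) hδ
    exact ⟨q, fun j => j.elim0, fun k => by rw [abs_sub_comm]; exact hq k⟩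
  | succ r IH =>
    intro a b x hx δ hδ
    by_cases h0 : ∀ k, a 0 k = 0
    · have hb0 : b 0 = 0 := by
        have := hx 0
        simp only [h0] at this
        push_cast at this
        simp at this
        exact_mod_cast this.symm
      obtain ⟨q, hq1, hq2⟩ := IH (fun j => a j.succ) (fun j => b j.succ) x
        (fun j => hx j.succ) δ hδ
      refine ⟨q, fun j => ?_, hq2⟩
      induction j using Fin.cases with
      | zero => simp [h0, hb0]
      | succ j => exact hq1 j
    · push_neg at h0
      obtain ⟨i0, hi0⟩ := h0
      set ratio : Fin r → ℚ := fun j => a j.succ i0 / a 0 i0 with hratio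
      set a' : Fin r → Fin N → ℚ := fun j k => a j.succ k - ratio j * a 0 k with ha'
      set b' : Fin r → ℚ := fun j => b j.succ - ratio j * b 0 with hb'
      have hx' : ∀ j, ∑ k, (a' j k : ℝ) * x k = (b' j : ℝ) := by
        intro j
        have h1 := hx j.succ
        have h2 := hx 0
        simp only [ha', hb']
        push_cast
        calc ∑ k, ((a j.succ k : ℝ) - (ratio j : ℝ) * (a 0 k : ℝ)) * x k
            = ∑ k, ((a j.succ k : ℝ) * x k) - (ratio j : ℝ) * ∑ k, (a 0 k : ℝ) * x k := by
              rw [Finset.mul_sum, ← Finset.sum_sub_distrib]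
              apply Finset.sum_congr rfl
              intro k _; ring
          _ = (b j.succ : ℝ) - (ratio j : ℝ) * (b 0 : ℝ) := by rw [h1, h2]
      set C : ℝ := (∑ k, |(a 0 k : ℝ)|) / |(a 0 i0 : ℝ)| with hC
      have hCpos : 0 ≤ C := by positivity
      have hδ' : 0 < δ / (1 + C) := by positivity
      obtain ⟨q', hq'1, hq'2⟩ := IH a' b' x hx' (δ / (1 + C)) hδ'
      set pivot : ℚ := (b 0 - ∑ k ∈ Finset.univ.erase i0, a 0 k * q' k) / a 0 i0 with hpiv
      set q : Fin N → ℚ := Function.update q' i0 pivot with hqdef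
      have hq_ne : ∀ k, k ≠ i0 → q k = q' k := fun k hk => Function.update_of_ne hk _ _
      have hq_i0 : q i0 = pivot := Function.update_self _ _ _
      have hrow0 : ∑ k, a 0 k * q k = b 0 := by
        rw [← Finset.sum_erase_add _ _ (Finset.mem_univ i0)]
        have : ∑ k ∈ Finset.univ.erase i0, a 0 k * q k
            = ∑ k ∈ Finset.univ.erase i0, a 0 k * q' k := by
          apply Finset.sum_congr rfl
          intro k hk
          rw [hq_ne k (Finset.ne_of_mem_erase hk)]
        rw [this, hq_i0, hpiv]
        field_simp
        ring
      have ha'i0 : ∀ j, a' j i0 = 0 := by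
        intro j; simp only [ha', hratio]; field_simp
        ring
      have hrows : ∀ j : Fin r, ∑ k, a j.succ k * q k = b j.succ := by
        intro j
        have e1 : ∑ k, a' j k * q k = ∑ k, a' j k * q' k := by
          rw [← Finset.sum_erase_add _ _ (Finset.mem_univ i0),
              ← Finset.sum_erase_add _ (fun k => a' j k * q' k) (Finset.mem_univ i0)]
          rw [ha'i0 j]
          simp only [zero_mul]
          congr 1
          apply Finset.sum_congr rfl
          intro k hk
          rw [hq_ne k (Finset.ne_of_mem_erase hk)]
        have e2 : ∑ k, a j.succ k * q k
            = ∑ k, a' j k * q k + ratio j * ∑ k, a 0 k * q k := by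
          rw [Finset.mul_sum, ← Finset.sum_add_distrib]
          apply Finset.sum_congr rfl
          intro k _
          simp only [ha']
          ring
        rw [e2, e1, hq'1 j, hrow0, hb']
        ring
      refine ⟨q, fun j => ?_, fun k => ?_⟩
      · induction j using Fin.cases with
        | zero => exact hrow0
        | succ j => exact hrows j
      · rcases eq_or_ne k i0 with heq | hk
        · subst heq
          have hxrow := hx 0
          have hxi0 : (a 0 k : ℝ) * x k = (b 0 : ℝ) - ∑ i ∈ Finset.univ.erase k, (a 0 i : ℝ) * x i := by
            rw [← Finset.sum_erase_add _ (fun i => (a 0 i : ℝ) * x i) (Finset.mem_univ k)] at hxrow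
            linarith
          have hqi0 : (a 0 k : ℝ) * (q k : ℝ) = (b 0 : ℝ) - ∑ i ∈ Finset.univ.erase k, (a 0 i : ℝ) * (q' i : ℝ) := by
            rw [hq_i0, hpiv]
            push_cast
            have : (a 0 k : ℝ) ≠ 0 := by exact_mod_cast hi0
            field_simp
          have hdiff : (a 0 k : ℝ) * ((q k : ℝ) - x k)
              = ∑ i ∈ Finset.univ.erase k, (a 0 i : ℝ) * (x i - (q' i : ℝ)) := by
            rw [mul_sub, hqi0, hxi0]
            simp only [mul_sub]
            rw [Finset.sum_sub_distrib]
            ring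
          have habs : |(a 0 k : ℝ)| * |(q k : ℝ) - x k|
              ≤ (∑ i, |(a 0 i : ℝ)|) * (δ / (1 + C)) := by
            rw [← abs_mul, hdiff]
            calc |∑ i ∈ Finset.univ.erase k, (a 0 i : ℝ) * (x i - (q' i : ℝ))|
                ≤ ∑ i ∈ Finset.univ.erase k, |(a 0 i : ℝ) * (x i - (q' i : ℝ))| :=
                  Finset.abs_sum_le_sum_abs _ _
              _ ≤ ∑ i ∈ Finset.univ.erase k, |(a 0 i : ℝ)| * (δ / (1 + C)) := by
                  apply Finset.sum_le_sum
                  intro i _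
                  rw [abs_mul]
                  exact mul_le_mul_of_nonneg_left (by rw [abs_sub_comm]; exact (hq'2 i).le) (abs_nonneg _)
              _ ≤ ∑ i, |(a 0 i : ℝ)| * (δ / (1 + C)) := by
                  apply Finset.sum_le_sum_of_subset_of_nonneg (Finset.erase_subset _ _)
                  intro i _ _; positivity
              _ = (∑ i, |(a 0 i : ℝ)|) * (δ / (1 + C)) := by rw [Finset.sum_mul]
          have hai0 : (0:ℝ) < |(a 0 k : ℝ)| := by
            have : (a 0 k : ℝ) ≠ 0 := by exact_mod_cast hi0
            exact abs_pos.mpr this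
          have hfin : |(q k : ℝ) - x k| ≤ C * (δ / (1 + C)) := by
            rw [hC, div_mul_eq_mul_div, le_div_iff₀ hai0, mul_comm]
            exact habs
          calc |(q k : ℝ) - x k| ≤ C * (δ / (1 + C)) := hfin
            _ < δ := by
              rw [mul_div_assoc', div_lt_iff₀ (by positivity)]
              nlinarith
        · rw [hq_ne k hk]
          calc |(q' k : ℝ) - x k| < δ / (1 + C) := hq'2 k
            _ ≤ δ := by
              rw [div_le_iff₀ (by positivity)]
              nlinarith

set_option maxHeartbeats 1000000 in
lemma memF_of (n m : ℕ) (c11 : Fin n → ℚ) (A11 : Matrix (Fin m) (Fin n) ℚ)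
    (A12 b1 : Fin m → ℚ) (xb1 : Fin n → ℝ) (xb2 : ℝ)
    (hxb : (xb1, xb2) ∈ PsF n m c11 A11 A12 b1)
    (y1 : Fin n → ℝ) (y2 : ℝ)
    (h2a : 0 ≤ y2) (h2b : y2 ≤ 1)
    (hfeasy : ∀ j, (b1 j : ℝ) ≤ ∑ k, (A11 j k : ℝ) * y1 k + (A12 j : ℝ) * y2)
    (hboxy : ∀ k, 0 ≤ y1 k ∧ y1 k ≤ 1)
    (hact : ∀ j, (∑ k, (A11 j k : ℝ) * xb1 k + (A12 j : ℝ) * xb2 = (b1 j : ℝ)) →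
      (∑ k, (A11 j k : ℝ) * y1 k + (A12 j : ℝ) * y2 = (b1 j : ℝ)))
    (h0 : ∀ k, xb1 k = 0 → y1 k = 0)
    (h1 : ∀ k, xb1 k = 1 → y1 k = 1) :
    (y1, y2) ∈ PsF n m c11 A11 A12 b1 := by
  classical
  obtain ⟨hb0, hb1, hcon, hbox, hopt⟩ := hxb
  simp only [Set.mem_setOf_eq] at hcon hbox hopt ⊢
  refine ⟨h2a, h2b, hfeasy, hboxy, ?_⟩
  intro z hz
  obtain ⟨hzcon, hzbox⟩ := hz
  set d : Fin n → ℝ := fun k => z k - y1 k with hd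
  set uA : Fin m → ℝ := fun j =>
    if (∑ k, (A11 j k : ℝ) * xb1 k + (A12 j : ℝ) * xb2 = (b1 j : ℝ)) then 1
    else ((∑ k, (A11 j k : ℝ) * xb1 k + (A12 j : ℝ) * xb2) - b1 j) /
      (1 + |∑ k, (A11 j k : ℝ) * d k|) with huA
  set uB : Fin n → ℝ := fun k =>
    (min (if xb1 k = 0 then 1 else xb1 k) (if xb1 k = 1 then 1 else 1 - xb1 k)) / (1 + |d k|)
    with huB
  set u : (Fin m ⊕ Fin n) ⊕ Unit → ℝ :=
    Sum.elim (Sum.elim uA uB) (fun _ => 1) with hu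
  have hne : (Finset.univ : Finset ((Fin m ⊕ Fin n) ⊕ Unit)).Nonempty :=
    ⟨Sum.inr (), Finset.mem_univ _⟩
  set t : ℝ := Finset.univ.inf' hne u with ht
  have hupos : ∀ s, 0 < u s := by
    rintro ((j | k) | s)
    · simp only [hu, Sum.elim_inl, huA]
      split
      · exact one_pos
      · rename_i hne'
        have hge := hcon j
        have hlt : (b1 j : ℝ) < ∑ k, (A11 j k : ℝ) * xb1 k + (A12 j : ℝ) * xb2 :=
          lt_of_le_of_ne hge (fun hh => hne' hh.symm)
        have hden : (0:ℝ) < 1 + |∑ k, (A11 j k : ℝ) * d k| := by positivity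
        exact div_pos (by linarith) hden
    · simp only [hu, Sum.elim_inl, Sum.elim_inr, huB]
      have hb := hbox k
      apply div_pos _ (by positivity)
      apply lt_min
      · split
        · exact one_pos
        · rename_i hne'
          exact lt_of_le_of_ne hb.1 (fun hh => hne' hh.symm)
      · split
        · exact one_pos
        · rename_i hne'
          have : xb1 k < 1 := lt_of_le_of_ne hb.2 hne'
          linarith
    · simp only [hu, Sum.elim_inr]
      exact one_pos
  have htpos : 0 < t := by
    rw [ht, Finset.lt_inf'_iff]
    intro s _
    exact hupos s
  have htleA : ∀ j, t ≤ uA j := by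
    intro j
    have h := Finset.inf'_le u (Finset.mem_univ (Sum.inl (Sum.inl j)))
    simpa only [hu, Sum.elim_inl] using h
  have htleB : ∀ k, t ≤ uB k := by
    intro k
    have h := Finset.inf'_le u (Finset.mem_univ (Sum.inl (Sum.inr k)))
    simpa only [hu, Sum.elim_inl, Sum.elim_inr] using h
  set w : Fin n → ℝ := fun k => xb1 k + t * d k with hw
  have hwsum : ∀ j, ∑ k, (A11 j k : ℝ) * w k
      = ∑ k, (A11 j k : ℝ) * xb1 k + t * ∑ k, (A11 j k : ℝ) * d k := by
    intro j
    have e : ∑ k, (A11 j k : ℝ) * w k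
        = ∑ k, ((A11 j k : ℝ) * xb1 k + t * ((A11 j k : ℝ) * d k)) :=
      Finset.sum_congr rfl (fun k _ => by simp only [hw]; ring)
    rw [e, Finset.sum_add_distrib, ← Finset.mul_sum]
  have hdsum : ∀ j, ∑ k, (A11 j k : ℝ) * d k
      = ∑ k, (A11 j k : ℝ) * z k - ∑ k, (A11 j k : ℝ) * y1 k := by
    intro j
    have e : ∑ k, (A11 j k : ℝ) * d k
        = ∑ k, ((A11 j k : ℝ) * z k - (A11 j k : ℝ) * y1 k) :=
      Finset.sum_congr rfl (fun k _ => by simp only [hd]; ring)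
    rw [e, Finset.sum_sub_distrib]
  have hwfeas : ∀ j, (b1 j : ℝ) ≤ ∑ k, (A11 j k : ℝ) * w k + (A12 j : ℝ) * xb2 := by
    intro j
    by_cases hj : ∑ k, (A11 j k : ℝ) * xb1 k + (A12 j : ℝ) * xb2 = (b1 j : ℝ)
    · have hyeq := hact j hj
      have hdge : 0 ≤ ∑ k, (A11 j k : ℝ) * d k := by
        have h1' := hzcon j
        rw [hdsum j]
        simp only at h1'
        linarith
      have := mul_nonneg htpos.le hdge
      rw [hwsum j]
      linarith
    · have hub := htleA j
      rw [huA] at hub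
      simp only [if_neg hj] at hub
      have hpos : (0:ℝ) < 1 + |∑ k, (A11 j k : ℝ) * d k| := by positivity
      rw [le_div_iff₀ hpos] at hub
      have habs : |t * ∑ k, (A11 j k : ℝ) * d k| ≤
          (∑ k, (A11 j k : ℝ) * xb1 k + (A12 j : ℝ) * xb2) - b1 j := by
        rw [abs_mul, abs_of_pos htpos]
        nlinarith [abs_nonneg (∑ k, (A11 j k : ℝ) * d k)]
      have h2' := (abs_le.mp habs).1
      rw [hwsum j]
      linarith
  have hwbox : ∀ k, 0 ≤ w k ∧ w k ≤ 1 := by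
    intro k
    have hub := htleB k
    rw [huB] at hub
    have hpos : (0:ℝ) < 1 + |d k| := by positivity
    rw [le_div_iff₀ hpos] at hub
    have htd : |t * d k| ≤ min (if xb1 k = 0 then 1 else xb1 k)
        (if xb1 k = 1 then 1 else 1 - xb1 k) := by
      rw [abs_mul, abs_of_pos htpos]
      nlinarith [abs_nonneg (d k)]
    have htd' := abs_le.mp htd
    have hbk := hbox k
    have hzk := hzbox k
    by_cases hk0 : xb1 k = 0
    · have hy0 := h0 k hk0
      have hdk : 0 ≤ d k := by simp only [hd]; rw [hy0]; simpa using hzk.1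
      have hmle : min (if xb1 k = 0 then 1 else xb1 k)
          (if xb1 k = 1 then 1 else 1 - xb1 k) ≤ 1 := by
        rw [if_pos hk0]; exact min_le_left _ _
      constructor
      · simp only [hw, hk0, zero_add]
        exact mul_nonneg htpos.le hdk
      · simp only [hw, hk0, zero_add]
        linarith [htd'.2]
    · by_cases hk1 : xb1 k = 1
      · have hy1 := h1 k hk1
        have hdk : d k ≤ 0 := by simp only [hd]; rw [hy1]; linarith [hzk.2]
        have hmle : min (if xb1 k = 0 then 1 else xb1 k)
            (if xb1 k = 1 then 1 else 1 - xb1 k) ≤ 1 := by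
          rw [if_pos hk1]; exact min_le_right _ _
        constructor
        · simp only [hw, hk1]
          linarith [htd'.1]
        · simp only [hw, hk1]
          have hneg : 0 ≤ t * (-(d k)) := mul_nonneg htpos.le (by linarith)
          nlinarith [hneg]
      · have hmle1 : min (if xb1 k = 0 then 1 else xb1 k)
            (if xb1 k = 1 then 1 else 1 - xb1 k) ≤ xb1 k := by
          rw [if_neg hk0]; exact min_le_left _ _
        have hmle2 : min (if xb1 k = 0 then 1 else xb1 k)
            (if xb1 k = 1 then 1 else 1 - xb1 k) ≤ 1 - xb1 k := by
          rw [if_neg hk1]; exact min_le_right _ _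
        constructor
        · simp only [hw]
          linarith [htd'.1]
        · simp only [hw]
          linarith [htd'.2]
  have hkey := hopt w ⟨hwfeas, hwbox⟩
  have hexp : ∑ k, (c11 k : ℝ) * w k = ∑ k, (c11 k : ℝ) * xb1 k + t * ∑ k, (c11 k : ℝ) * d k := by
    have e : ∑ k, (c11 k : ℝ) * w k
        = ∑ k, ((c11 k : ℝ) * xb1 k + t * ((c11 k : ℝ) * d k)) :=
      Finset.sum_congr rfl (fun k _ => by simp only [hw]; ring)
    rw [e, Finset.sum_add_distrib, ← Finset.mul_sum]
  have hdge : 0 ≤ ∑ k, (c11 k : ℝ) * d k := by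
    rw [hexp] at hkey
    nlinarith
  have hsplit : ∑ k, (c11 k : ℝ) * d k = ∑ k, (c11 k : ℝ) * z k - ∑ k, (c11 k : ℝ) * y1 k := by
    have e : ∑ k, (c11 k : ℝ) * d k
        = ∑ k, ((c11 k : ℝ) * z k - (c11 k : ℝ) * y1 k) :=
      Finset.sum_congr rfl (fun k _ => by simp only [hd]; ring)
    rw [e, Finset.sum_sub_distrib]
  rw [hsplit] at hdge
  linarith


set_option maxHeartbeats 2000000

/-- if `(P_single)` (with rational data) has a locally optimal solution,
then it has a locally optimal solution all of whose coordinates are rational. -/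
theorem stmt17 (n m : ℕ) (c11 c21 : Fin n → ℚ) (c22 : ℚ)
    (A11 : Matrix (Fin m) (Fin n) ℚ) (A12 b1 : Fin m → ℚ)
    (h : ∃ xb, IsLocalOpt n m c11 c21 c22 A11 A12 b1 xb) :
    ∃ (q1 : Fin n → ℚ) (q2 : ℚ),
      IsLocalOpt n m c11 c21 c22 A11 A12 b1 ((fun i => (q1 i : ℝ)), (q2 : ℝ)) := by
  classical
  obtain ⟨⟨xb1, xb2⟩, hF, ε, hε, hloc⟩ := h
  obtain ⟨h20, h21, hcon, hbox, hopt⟩ := hF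
  simp only at h20 h21 hcon hbox hopt
  have hF' : (xb1, xb2) ∈ PsF n m c11 A11 A12 b1 := ⟨h20, h21, hcon, hbox, hopt⟩
  -- the equation system recording the active pattern at (xb1, xb2)
  set σ := (Fin m ⊕ Fin n) ⊕ Unit with hσ
  set Arow : σ → Fin (n + 1) → ℚ := fun s =>
    match s with
    | Sum.inl (Sum.inl j) =>
        if (∑ k, (A11 j k : ℝ) * xb1 k + (A12 j : ℝ) * xb2 = (b1 j : ℝ))
        then Fin.cons (A12 j) (fun k => A11 j k) else 0
    | Sum.inl (Sum.inr k) =>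
        if (xb1 k = 0 ∨ xb1 k = 1)
        then Fin.cons 0 (fun k' => if k' = k then 1 else 0) else 0
    | Sum.inr _ => if (xb2 = 0 ∨ xb2 = 1) then Fin.cons 1 0 else 0
    with hArow
  set βr : σ → ℚ := fun s =>
    match s with
    | Sum.inl (Sum.inl j) =>
        if (∑ k, (A11 j k : ℝ) * xb1 k + (A12 j : ℝ) * xb2 = (b1 j : ℝ)) then b1 j else 0
    | Sum.inl (Sum.inr k) => if xb1 k = 1 then 1 else 0
    | Sum.inr _ => if xb2 = 1 then 1 else 0
    with hβr
  -- (xb1, xb2) satisfies the system, in split form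
  have hsolve : ∀ s, (Arow s 0 : ℝ) * xb2 + ∑ k : Fin n, (Arow s k.succ : ℝ) * xb1 k = (βr s : ℝ) := by
    rintro ((j | k) | s)
    · simp only [hArow, hβr]
      by_cases hj : ∑ k, (A11 j k : ℝ) * xb1 k + (A12 j : ℝ) * xb2 = (b1 j : ℝ)
      · rw [if_pos hj, if_pos hj]
        simp only [Fin.cons_zero, Fin.cons_succ]
        linarith
      · rw [if_neg hj, if_neg hj]
        simp
    · simp only [hArow, hβr]
      by_cases hk : xb1 k = 0 ∨ xb1 k = 1
      · rw [if_pos hk]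
        simp only [Fin.cons_zero, Fin.cons_succ]
        have hs : ∑ k', ((if k' = k then (1:ℚ) else 0 : ℚ) : ℝ) * xb1 k' = xb1 k := by
          rw [Finset.sum_eq_single k]
          · simp
          · intro k' _ hk'
            simp [hk']
          · intro hk'
            exact absurd (Finset.mem_univ k) hk'
        rw [hs]
        rcases hk with hk | hk
        · have hne1 : xb1 k ≠ 1 := by rw [hk]; norm_num
          rw [if_neg hne1, hk]
          norm_num
        · rw [if_pos hk, hk]
          norm_num
      · rw [if_neg hk]
        push_neg at hk
        rw [if_neg hk.2]
        simp
    · simp only [hArow, hβr]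
      by_cases hk : xb2 = 0 ∨ xb2 = 1
      · rw [if_pos hk]
        simp only [Fin.cons_zero, Fin.cons_succ, Pi.zero_apply]
        rcases hk with hk | hk
        · have hne1 : xb2 ≠ 1 := by rw [hk]; norm_num
          rw [if_neg hne1, hk]
          norm_num
        · rw [if_pos hk, hk]
          norm_num
      · rw [if_neg hk]
        push_neg at hk
        rw [if_neg hk.2]
        simp
  -- safety radius for the strict constraints
  set g : σ → ℝ := fun s =>
    match s with
    | Sum.inl (Sum.inl j) =>
        if (∑ k, (A11 j k : ℝ) * xb1 k + (A12 j : ℝ) * xb2 = (b1 j : ℝ)) then 1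
        else ((∑ k, (A11 j k : ℝ) * xb1 k + (A12 j : ℝ) * xb2) - b1 j) /
          (1 + ∑ k, |(A11 j k : ℝ)| + |(A12 j : ℝ)|)
    | Sum.inl (Sum.inr k) =>
        min (if xb1 k = 0 then 1 else xb1 k) (if xb1 k = 1 then 1 else 1 - xb1 k)
    | Sum.inr _ => min (if xb2 = 0 then 1 else xb2) (if xb2 = 1 then 1 else 1 - xb2)
    with hg
  have hne : (Finset.univ : Finset σ).Nonempty := ⟨Sum.inr (), Finset.mem_univ _⟩
  have hgpos : ∀ s, 0 < g s := by
    rintro ((j | k) | s)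
    · simp only [hg]
      split
      · exact one_pos
      · rename_i hj
        have hge := hcon j
        have hlt : (b1 j : ℝ) < ∑ k, (A11 j k : ℝ) * xb1 k + (A12 j : ℝ) * xb2 :=
          lt_of_le_of_ne hge (fun hh => hj hh.symm)
        have hden : (0:ℝ) < 1 + ∑ k, |(A11 j k : ℝ)| + |(A12 j : ℝ)| := by
          have : (0:ℝ) ≤ ∑ k, |(A11 j k : ℝ)| := Finset.sum_nonneg (fun k _ => abs_nonneg _)
          have := abs_nonneg ((A12 j : ℝ))
          linarith
        exact div_pos (by linarith) hden
    · simp only [hg]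
      have hb := hbox k
      apply lt_min
      · split
        · exact one_pos
        · rename_i hk
          exact lt_of_le_of_ne hb.1 (fun hh => hk hh.symm)
      · split
        · exact one_pos
        · rename_i hk
          have : xb1 k < 1 := lt_of_le_of_ne hb.2 hk
          linarith
    · simp only [hg]
      apply lt_min
      · split
        · exact one_pos
        · rename_i hk
          exact lt_of_le_of_ne h20 (fun hh => hk hh.symm)
      · split
        · exact one_pos
        · rename_i hk
          have : xb2 < 1 := lt_of_le_of_ne h21 hk
          linarith
  set δ1 : ℝ := Finset.univ.inf' hne g with hδ1
  have hδ1pos : 0 < δ1 := by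
    rw [hδ1, Finset.lt_inf'_iff]
    intro s _
    exact hgpos s
  have hδ1le : ∀ s, δ1 ≤ g s := fun s => Finset.inf'_le g (Finset.mem_univ s)
  set δ : ℝ := min (ε / 2) δ1 with hδ
  have hδpos : 0 < δ := lt_min (by linarith) hδ1pos
  -- get the rational point via density
  set e : σ ≃ Fin (Fintype.card σ) := Fintype.equivFin σ with he
  set xall : Fin (n + 1) → ℝ := Fin.cons xb2 xb1 with hxall
  have hsolve' : ∀ i : Fin (Fintype.card σ),
      ∑ kk, ((Arow (e.symm i)) kk : ℝ) * xall kk = (βr (e.symm i) : ℝ) := by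
    intro i
    rw [Fin.sum_univ_succ]
    simp only [hxall, Fin.cons_zero, Fin.cons_succ]
    exact hsolve (e.symm i)
  obtain ⟨q, hq1, hq2⟩ := ratDense (Fintype.card σ) (fun i => Arow (e.symm i))
    (fun i => βr (e.symm i)) xall hsolve' δ hδpos
  have hqrow : ∀ s, (Arow s 0 : ℝ) * (q 0 : ℝ)
      + ∑ k : Fin n, (Arow s k.succ : ℝ) * (q k.succ : ℝ) = (βr s : ℝ) := by
    intro s
    have := hq1 (e s)
    simp only [Equiv.symm_apply_apply] at this
    have hcast : ∑ kk, ((Arow s) kk : ℝ) * ((q kk : ℚ) : ℝ) = (βr s : ℝ) := by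
      exact_mod_cast congrArg (fun r : ℚ => (r : ℝ)) this
    rw [Fin.sum_univ_succ] at hcast
    exact hcast
  have hq20 : |(q 0 : ℝ) - xb2| < δ := by
    have := hq2 0
    simpa [hxall] using this
  have hq2s : ∀ k : Fin n, |(q k.succ : ℝ) - xb1 k| < δ := by
    intro k
    have := hq2 k.succ
    simpa [hxall] using this
  -- the key membership fact
  have key : ∀ (y1 : Fin n → ℝ) (y2 : ℝ),
      (∀ s, (Arow s 0 : ℝ) * y2 + ∑ k : Fin n, (Arow s k.succ : ℝ) * y1 k = (βr s : ℝ)) →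
      (|y2 - xb2| ≤ δ1) → (∀ k, |y1 k - xb1 k| ≤ δ1) →
      (y1, y2) ∈ PsF n m c11 A11 A12 b1 := by
    intro y1 y2 hrow hc2 hc1
    -- active rows give equalities
    have hact : ∀ j, (∑ k, (A11 j k : ℝ) * xb1 k + (A12 j : ℝ) * xb2 = (b1 j : ℝ)) →
        (∑ k, (A11 j k : ℝ) * y1 k + (A12 j : ℝ) * y2 = (b1 j : ℝ)) := by
      intro j hj
      have := hrow (Sum.inl (Sum.inl j))
      simp only [hArow, hβr, if_pos hj, Fin.cons_zero, Fin.cons_succ] at this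
      linarith
    have h0 : ∀ k, xb1 k = 0 → y1 k = 0 := by
      intro k hk
      have := hrow (Sum.inl (Sum.inr k))
      simp only [hArow, hβr, if_pos (Or.inl hk), Fin.cons_zero, Fin.cons_succ] at this
      rw [if_neg (by rw [hk]; norm_num)] at this
      have hs : ∑ k', ((if k' = k then (1:ℚ) else 0 : ℚ) : ℝ) * y1 k' = y1 k := by
        rw [Finset.sum_eq_single k]
        · simp
        · intro k' _ hk'
          simp [hk']
        · intro hk'
          exact absurd (Finset.mem_univ k) hk'
      rw [hs] at this
      simpa using this
    have h1 : ∀ k, xb1 k = 1 → y1 k = 1 := by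
      intro k hk
      have := hrow (Sum.inl (Sum.inr k))
      simp only [hArow, hβr, if_pos (Or.inr hk), Fin.cons_zero, Fin.cons_succ] at this
      rw [if_pos hk] at this
      have hs : ∑ k', ((if k' = k then (1:ℚ) else 0 : ℚ) : ℝ) * y1 k' = y1 k := by
        rw [Finset.sum_eq_single k]
        · simp
        · intro k' _ hk'
          simp [hk']
        · intro hk'
          exact absurd (Finset.mem_univ k) hk'
      rw [hs] at this
      simpa using this
    -- x2 bounds
    have hy2 : 0 ≤ y2 ∧ y2 ≤ 1 := by
      by_cases hk : xb2 = 0 ∨ xb2 = 1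
      · have := hrow (Sum.inr ())
        simp only [hArow, hβr, if_pos hk, Fin.cons_zero, Fin.cons_succ] at this
        simp only [Pi.zero_apply] at this
        rcases hk with hk | hk
        · rw [if_neg (by rw [hk]; norm_num)] at this
          simp at this
          constructor <;> simp [this]
        · rw [if_pos hk] at this
          simp at this
          constructor <;> simp [this]
      · push_neg at hk
        have hg' := hδ1le (Sum.inr ())
        simp only [hg] at hg'
        rw [if_neg hk.1, if_neg hk.2] at hg'
        have h2' := abs_le.mp hc2
        have := le_min_iff.mp hg'
        constructor
        · linarith [this.1, h2'.1]
        · linarith [this.2, h2'.2]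
    -- x1 box
    have hy1box : ∀ k, 0 ≤ y1 k ∧ y1 k ≤ 1 := by
      intro k
      by_cases hk0 : xb1 k = 0
      · rw [h0 k hk0]; norm_num
      · by_cases hk1 : xb1 k = 1
        · rw [h1 k hk1]; norm_num
        · have hg' := hδ1le (Sum.inl (Sum.inr k))
          simp only [hg] at hg'
          rw [if_neg hk0, if_neg hk1] at hg'
          have h1' := abs_le.mp (hc1 k)
          have := le_min_iff.mp hg'
          constructor
          · linarith [this.1, h1'.1]
          · linarith [this.2, h1'.2]
    -- feasibility of all constraints
    have hyfeas : ∀ j, (b1 j : ℝ) ≤ ∑ k, (A11 j k : ℝ) * y1 k + (A12 j : ℝ) * y2 := by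
      intro j
      by_cases hj : ∑ k, (A11 j k : ℝ) * xb1 k + (A12 j : ℝ) * xb2 = (b1 j : ℝ)
      · rw [hact j hj]
      · have hg' := hδ1le (Sum.inl (Sum.inl j))
        simp only [hg] at hg'
        rw [if_neg hj] at hg'
        have hden : (0:ℝ) < 1 + ∑ k, |(A11 j k : ℝ)| + |(A12 j : ℝ)| := by
          have h1' : (0:ℝ) ≤ ∑ k, |(A11 j k : ℝ)| := Finset.sum_nonneg (fun k _ => abs_nonneg _)
          have h2' := abs_nonneg ((A12 j : ℝ))
          linarith
        rw [le_div_iff₀ hden] at hg'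
        -- perturbation estimate
        have hest : |(∑ k, (A11 j k : ℝ) * y1 k + (A12 j : ℝ) * y2)
            - (∑ k, (A11 j k : ℝ) * xb1 k + (A12 j : ℝ) * xb2)|
            ≤ δ1 * (∑ k, |(A11 j k : ℝ)| + |(A12 j : ℝ)|) := by
          have hrw : (∑ k, (A11 j k : ℝ) * y1 k + (A12 j : ℝ) * y2)
              - (∑ k, (A11 j k : ℝ) * xb1 k + (A12 j : ℝ) * xb2)
              = (∑ k, (A11 j k : ℝ) * (y1 k - xb1 k)) + (A12 j : ℝ) * (y2 - xb2) := by
            have e : ∑ k, (A11 j k : ℝ) * (y1 k - xb1 k)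
                = ∑ k, ((A11 j k : ℝ) * y1 k - (A11 j k : ℝ) * xb1 k) :=
              Finset.sum_congr rfl (fun k _ => by ring)
            rw [e, Finset.sum_sub_distrib]
            ring
          rw [hrw]
          calc |(∑ k, (A11 j k : ℝ) * (y1 k - xb1 k)) + (A12 j : ℝ) * (y2 - xb2)|
              ≤ |∑ k, (A11 j k : ℝ) * (y1 k - xb1 k)| + |(A12 j : ℝ) * (y2 - xb2)| :=
                abs_add_le _ _
            _ ≤ (∑ k, |(A11 j k : ℝ)| * δ1) + |(A12 j : ℝ)| * δ1 := by
                gcongr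
                · calc |∑ k, (A11 j k : ℝ) * (y1 k - xb1 k)|
                      ≤ ∑ k, |(A11 j k : ℝ) * (y1 k - xb1 k)| := Finset.abs_sum_le_sum_abs _ _
                    _ ≤ ∑ k, |(A11 j k : ℝ)| * δ1 := by
                        apply Finset.sum_le_sum
                        intro k _
                        rw [abs_mul]
                        exact mul_le_mul_of_nonneg_left (hc1 k) (abs_nonneg _)
                · rw [abs_mul]
                  exact mul_le_mul_of_nonneg_left hc2 (abs_nonneg _)
            _ = δ1 * (∑ k, |(A11 j k : ℝ)| + |(A12 j : ℝ)|) := by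
                rw [← Finset.sum_mul]
                ring
        have hest' := (abs_le.mp hest).1
        have hδd : δ1 * (∑ k, |(A11 j k : ℝ)| + |(A12 j : ℝ)|)
            ≤ (∑ k, (A11 j k : ℝ) * xb1 k + (A12 j : ℝ) * xb2) - b1 j := by
          calc δ1 * (∑ k, |(A11 j k : ℝ)| + |(A12 j : ℝ)|)
              ≤ δ1 * (1 + (∑ k, |(A11 j k : ℝ)| + |(A12 j : ℝ)|)) - δ1 := by ring_nf; rfl
            _ ≤ ((∑ k, (A11 j k : ℝ) * xb1 k + (A12 j : ℝ) * xb2) - b1 j) - δ1 := by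
                have : δ1 * (1 + (∑ k, |(A11 j k : ℝ)| + |(A12 j : ℝ)|))
                    ≤ (∑ k, (A11 j k : ℝ) * xb1 k + (A12 j : ℝ) * xb2) - b1 j := by
                  calc δ1 * (1 + (∑ k, |(A11 j k : ℝ)| + |(A12 j : ℝ)|))
                      = δ1 * (1 + ∑ k, |(A11 j k : ℝ)| + |(A12 j : ℝ)|) := by ring
                    _ ≤ _ := hg'
                linarith
            _ ≤ (∑ k, (A11 j k : ℝ) * xb1 k + (A12 j : ℝ) * xb2) - b1 j := by
                linarith [hδ1pos]
        linarith
    exact memF_of n m c11 A11 A12 b1 xb1 xb2 hF' y1 y2 hy2.1 hy2.2 hyfeas hy1box hact h0 h1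
  -- the rational candidate
  set q2 : ℚ := q 0 with hq2'
  set q1 : Fin n → ℚ := fun k => q k.succ with hq1'
  have hmemq : ((fun i => (q1 i : ℝ)), (q2 : ℝ)) ∈ PsF n m c11 A11 A12 b1 := by
    apply key
    · intro s
      exact hqrow s
    · exact le_trans hq20.le (min_le_right _ _)
    · intro k
      exact le_trans (hq2s k).le (min_le_right _ _)
  -- the reflected point
  have hmemr : ((fun k => 2 * xb1 k - (q1 k : ℝ)), (2 * xb2 - (q2 : ℝ)))
      ∈ PsF n m c11 A11 A12 b1 := by
    apply key
    · intro s
      have ha := hsolve s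
      have hb := hqrow s
      have e : ∑ k : Fin n, (Arow s k.succ : ℝ) * (2 * xb1 k - (q1 k : ℝ))
          = 2 * ∑ k : Fin n, (Arow s k.succ : ℝ) * xb1 k - ∑ k : Fin n, (Arow s k.succ : ℝ) * (q1 k : ℝ) := by
        rw [Finset.mul_sum, ← Finset.sum_sub_distrib]
        exact Finset.sum_congr rfl (fun k _ => by ring)
      rw [e]
      simp only [hq1', hq2'] at *
      linarith
    · have : |2 * xb2 - (q2 : ℝ) - xb2| = |(q2 : ℝ) - xb2| := by
        rw [← abs_neg]; congr 1; ring
      rw [this]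
      exact le_trans hq20.le (min_le_right _ _)
    · intro k
      have : |2 * xb1 k - (q1 k : ℝ) - xb1 k| = |(q1 k : ℝ) - xb1 k| := by
        rw [← abs_neg]; congr 1; ring
      rw [this]
      exact le_trans (hq2s k).le (min_le_right _ _)
  -- objective comparisons
  have hδε : δ ≤ ε / 2 := min_le_left _ _
  have hcl1 : ∀ i, |(q1 i : ℝ) - xb1 i| ≤ ε := by
    intro i
    have := (hq2s i).le
    have : |(q1 i : ℝ) - xb1 i| ≤ δ := this
    linarith
  have hcl2 : |(q2 : ℝ) - xb2| ≤ ε := by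
    have := hq20.le
    linarith
  have hobj1 : PsObj n c21 c22 (xb1, xb2) ≤ PsObj n c21 c22 ((fun i => (q1 i : ℝ)), (q2 : ℝ)) :=
    hloc _ hmemq ⟨hcl1, hcl2⟩
  have hobj2 : PsObj n c21 c22 (xb1, xb2)
      ≤ PsObj n c21 c22 ((fun k => 2 * xb1 k - (q1 k : ℝ)), (2 * xb2 - (q2 : ℝ))) := by
    apply hloc _ hmemr
    constructor
    · intro i
      have h' : |2 * xb1 i - (q1 i : ℝ) - xb1 i| = |(q1 i : ℝ) - xb1 i| := by
        rw [← abs_neg]; congr 1; ring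
      rw [h']
      exact hcl1 i
    · have h' : |2 * xb2 - (q2 : ℝ) - xb2| = |(q2 : ℝ) - xb2| := by
        rw [← abs_neg]; congr 1; ring
      rw [h']
      exact hcl2
  have hrefl : PsObj n c21 c22 ((fun k => 2 * xb1 k - (q1 k : ℝ)), (2 * xb2 - (q2 : ℝ)))
      = 2 * PsObj n c21 c22 (xb1, xb2)
        - PsObj n c21 c22 ((fun i => (q1 i : ℝ)), (q2 : ℝ)) := by
    simp only [PsObj]
    have e : ∑ k, (c21 k : ℝ) * (2 * xb1 k - (q1 k : ℝ))
        = 2 * ∑ k, (c21 k : ℝ) * xb1 k - ∑ k, (c21 k : ℝ) * (q1 k : ℝ) := by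
      rw [Finset.mul_sum, ← Finset.sum_sub_distrib]
      exact Finset.sum_congr rfl (fun k _ => by ring)
    simp only at *
    rw [e]
    ring
  have hobjeq : PsObj n c21 c22 ((fun i => (q1 i : ℝ)), (q2 : ℝ))
      = PsObj n c21 c22 (xb1, xb2) := by
    rw [hrefl] at hobj2
    linarith
  -- final: the rational point is locally optimal with radius ε/2
  refine ⟨q1, q2, hmemq, ε / 2, by linarith, ?_⟩
  intro x hx hcl
  have hq1d : ∀ i, |(q1 i : ℝ) - xb1 i| ≤ ε / 2 := by
    intro i
    have := (hq2s i).le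
    have h' : |(q1 i : ℝ) - xb1 i| ≤ δ := this
    linarith
  have hq2d : |(q2 : ℝ) - xb2| ≤ ε / 2 := by
    have := hq20.le
    linarith
  have hx1 : ∀ i, |x.1 i - xb1 i| ≤ ε := by
    intro i
    calc |x.1 i - xb1 i| = |(x.1 i - (q1 i : ℝ)) + ((q1 i : ℝ) - xb1 i)| := by ring_nf
      _ ≤ |x.1 i - (q1 i : ℝ)| + |(q1 i : ℝ) - xb1 i| := abs_add_le _ _
      _ ≤ ε / 2 + ε / 2 := add_le_add (hcl.1 i) (hq1d i)
      _ = ε := by ring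
  have hx2 : |x.2 - xb2| ≤ ε := by
    calc |x.2 - xb2| = |(x.2 - (q2 : ℝ)) + ((q2 : ℝ) - xb2)| := by ring_nf
      _ ≤ |x.2 - (q2 : ℝ)| + |(q2 : ℝ) - xb2| := abs_add_le _ _
      _ ≤ ε / 2 + ε / 2 := add_le_add hcl.2 hq2d
      _ = ε := by ring
  have hfin := hloc x hx ⟨hx1, hx2⟩
  calc PsObj n c21 c22 ((fun i => (q1 i : ℝ)), (q2 : ℝ))
      = PsObj n c21 c22 (xb1, xb2) := hobjeq
    _ ≤ PsObj n c21 c22 x := hfin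
end
end
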